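/- arXiv:1403.2573 — 4 statements merged into one kernel-verified Lean document; each statement's English description precedes it below -/
import Mathlib

section
/- The number of (α,β)-rooted labelled trees on n vertices equals ∏_{i=1}^{n-1} (nβ + (α−β)i). -/
/-!
Let `t` be the largest vertex of `S` and `D = S \ {t}`. Compare the trees on `S` with the
weighted maps `D → S`, where `v` may choose any `u ∈ S` (itself included) with `α` possible
weights if `u ≤ v` and `β` otherwise; with `n = |S|`, the vertex of rank `i` has
`iα + (n - i)β` choices, so these maps are counted by the claimed product. Both families split
along the set `A ⊆ D` of vertices whose path reaches `t`. The part on `A` is a tree hanging from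
`t` in both cases; the rest is a tree on `(D \ A) ∪ {t}` in which `t` is a leaf, respectively a
weighted self-map of `D \ A`. Since `t` is maximal, the leaf `t` hangs from any vertex of `D \ A`
with `α` weights, and the maximum of `D \ A` maps to any vertex of `D \ A` with `α` weights; so
both remainders are `|D \ A| α` times the count for `D \ A`, and strong induction on `S` finishes
the proof.
-/

/-- A (functional encoding of a) rooted forest on `Fin n`: `p j = some i` means
`i` is the parent of `j`; acyclicity is witnessed by a depth function. -/
def IsForest (n : ℕ) (p : Fin n → Option (Fin n)) : Prop :=
  ∃ d : Fin n → ℕ, ∀ j i : Fin n, p j = some i → d i < d j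

/-- An `(α,β)`-rooted labelled forest on `n` vertices: a rooted forest together
with a weight on each edge (recorded at the child), lying in `[1,α]` if the
parent's label is smaller than the child's, and in `[1,β]` if it is larger.
Roots carry the dummy weight `0`. -/
def ABForest (n α β : ℕ) : Type :=
  { pw : (Fin n → Option (Fin n)) × (Fin n → ℕ) //
    IsForest n pw.1 ∧
    (∀ j, pw.1 j = none → pw.2 j = 0) ∧
    ∀ j i, pw.1 j = some i →
      ((i : ℕ) < (j : ℕ) → pw.2 j ∈ Finset.Icc 1 α) ∧
      ((j : ℕ) < (i : ℕ) → pw.2 j ∈ Finset.Icc 1 β) }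

/-- An `(α,β)`-rooted labelled tree on `n` vertices: an `(α,β)`-forest with
exactly one root. -/
def ABTree (n α β : ℕ) : Type :=
  { t : ABForest n α β //
    (Finset.univ.filter (fun j : Fin n => t.1.1 j = none)).card = 1 }

namespace ABTree

open Finset Relation

section ParentMap

variable {V W : Type*}

/-- `f v = some (u, k)` encodes an edge from the child `v` to its parent `u` with weight `k`;
roots, and vertices outside the structure, have `f v = none`. -/
def Parent (f : V → Option (V × W)) (v u : V) : Prop := ∃ k, f v = some (u, k)

def Reaches (f : V → Option (V × W)) : V → V → Prop := ReflTransGen (Parent f)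

variable {f : V → Option (V × W)}

lemma Parent.unique {v u u' : V} (h : Parent f v u) (h' : Parent f v u') : u = u' := by
  obtain ⟨k, hk⟩ := h
  obtain ⟨k', hk'⟩ := h'
  simp_all

lemma not_parent_of_eq_none {v u : V} (hv : f v = none) : ¬Parent f v u := by
  rintro ⟨k, hk⟩
  simp [hv] at hk

lemma not_parent_none {v u : V} : ¬Parent (fun _ => (none : Option (V × W))) v u :=
  not_parent_of_eq_none rfl

lemma mem_of_parent {D : Finset V} (hD : ∀ v ∉ D, f v = none) {v u : V} (h : Parent f v u) :
    v ∈ D := by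
  by_contra hv
  exact not_parent_of_eq_none (hD v hv) h

lemma parent_map_iff {p : V → Option V} {w : V → W} {v u : V} :
    Parent (fun x => (p x).map (·, w x)) v u ↔ p v = some u := by
  cases h : p v <;> simp [Parent, h]

lemma Reaches.eq_of_eq_none {r w : V} (hr : f r = none) (h : Reaches f r w) : w = r := by
  rcases h.cases_head with rfl | ⟨u, hu, -⟩
  · rfl
  · exact absurd hu (not_parent_of_eq_none hr)

lemma Reaches.of_parent {v u w : V} (h : Reaches f v w) (hvu : Parent f v u) (hvw : v ≠ w) :
    Reaches f u w := by
  rcases h.cases_head with rfl | ⟨u', hu', h'⟩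
  · exact absurd rfl hvw
  · rwa [hvu.unique hu']

lemma Reaches.mem_of_closed {U : Finset V} (hU : ∀ a ∈ U, ∀ b, Parent f a b → b ∈ U) {v w : V}
    (h : Reaches f v w) (hv : v ∈ U) : w ∈ U := by
  induction h with
  | refl => exact hv
  | tail _ hbc ih => exact hU _ ih _ hbc

lemma Reaches.of_eqOn {g : V → Option (V × W)} {U : Finset V} {v w : V}
    (hfg : ∀ a ∈ U, a ≠ w → f a = g a) (hU : ∀ a ∈ U, a ≠ w → ∀ b, Parent g a b → b ∈ U)
    (h : Reaches g v w) (hv : v ∈ U) : Reaches f v w := by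
  induction h using ReflTransGen.head_induction_on with
  | refl => exact .refl
  | @head a b hab _ ih =>
    by_cases haw : a = w
    · exact haw ▸ .refl
    · exact .head (by rwa [Parent, hfg a hv haw]) (ih (hU a hv haw b hab))

lemma Reaches.not_reaches_of_parent {v r b : V} (hr : f r = none) (h : Reaches f v r)
    (hvb : Parent f v b) : ¬Reaches f b v := by
  induction h using ReflTransGen.head_induction_on generalizing b with
  | refl => exact absurd hvb (not_parent_of_eq_none hr)
  | head hxy _ ih =>
    rw [hvb.unique hxy]
    intro hyx
    rcases hyx.cases_head with rfl | ⟨c, hyc, hcx⟩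
    · exact ih hxy .refl
    · exact ih hyc (hcx.tail hxy)

theorem exists_depth_iff_forall_exists_reaches [Finite V] :
    (∃ d : V → ℕ, ∀ v u, Parent f v u → d u < d v) ↔ ∀ v, ∃ r, f r = none ∧ Reaches f v r := by
  constructor
  · rintro ⟨d, hd⟩ v
    induction hdv : d v using Nat.strong_induction_on generalizing v with
    | _ n ih =>
      rcases hv : f v with _ | ⟨u, k⟩
      · exact ⟨v, hv, .refl⟩
      · obtain ⟨r, hr, hur⟩ := ih (d u) (hdv ▸ hd v u ⟨k, hv⟩) u rfl
        exact ⟨r, hr, .head ⟨k, hv⟩ hur⟩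
  · intro h
    classical
    have := Fintype.ofFinite V
    -- depth of `v` := number of vertices reachable from `v`
    refine ⟨fun v => #{x | Reaches f v x}, fun v u hvu => card_lt_card ?_⟩
    refine (ssubset_iff_of_subset fun x hx => ?_).2 ⟨v, ?_, ?_⟩
    · exact mem_filter.2 ⟨mem_univ x, .head hvu (mem_filter.1 hx).2⟩
    · exact mem_filter.2 ⟨mem_univ v, .refl⟩
    · obtain ⟨r, hr, hvr⟩ := h v
      exact fun hu => hvr.not_reaches_of_parent hr hvu (mem_filter.1 hu).2

lemma card_eq_one_iff_exists_forall_reaches {R : Finset V} (hR : ∀ v, v ∈ R ↔ f v = none)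
    (hf : ∀ v, ∃ r, f r = none ∧ Reaches f v r) :
    #R = 1 ↔ ∃ r, f r = none ∧ ∀ v, Reaches f v r := by
  refine ⟨fun h => ?_, fun ⟨r, hr, hreach⟩ => card_eq_one.2 ⟨r, eq_singleton_iff_unique_mem.2
    ⟨(hR r).2 hr, fun x hx => ((hreach x).eq_of_eq_none ((hR x).1 hx)).symm⟩⟩⟩
  obtain ⟨r, rfl⟩ := card_eq_one.1 h
  refine ⟨r, (hR r).1 (mem_singleton_self r), fun v => ?_⟩
  obtain ⟨r', hr', hvr'⟩ := hf v
  rwa [← mem_singleton.1 ((hR r').2 hr')]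

open Classical in
noncomputable def reachSet (f : V → Option (V × W)) (t : V) (D : Finset V) : Finset V :=
  D.filter (Reaches f · t)

lemma mem_reachSet {t v : V} {D : Finset V} : v ∈ reachSet f t D ↔ v ∈ D ∧ Reaches f v t := by
  simp [reachSet]

lemma reachSet_subset {t : V} {D : Finset V} : reachSet f t D ⊆ D :=
  fun _ hv => (mem_reachSet.1 hv).1

variable [DecidableEq V]

lemma mem_sdiff_reachSet_of_parent {t : V} {D : Finset V}
    (hC : ∀ v u, Parent f v u → u ∈ insert t D) {v u : V} (hvu : Parent f v u)
    (hut : ¬Reaches f u t) : u ∈ D \ reachSet f t D := by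
  rcases mem_insert.1 (hC v u hvu) with rfl | hu
  · exact absurd .refl hut
  · exact mem_sdiff.2 ⟨hu, fun h => hut (mem_reachSet.1 h).2⟩

lemma parent_piecewise {g : V → Option (V × W)} {A : Finset V} {v u : V} :
    Parent (A.piecewise f g) v u ↔ if v ∈ A then Parent f v u else Parent g v u := by
  by_cases hv : v ∈ A <;> simp [Parent, hv]

lemma parent_update_some {t u v b : V} {k : W} :
    Parent (Function.update f t (some (u, k))) v b ↔ if v = t then b = u else Parent f v b := by
  by_cases hv : v = t <;> simp [Parent, hv, eq_comm]

lemma parent_update_none {t v b : V} :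
    Parent (Function.update f t none) v b ↔ v ≠ t ∧ Parent f v b := by
  by_cases hv : v = t <;> simp [Parent, hv]

end ParentMap

lemma mem_insert_sdiff_iff_of_notMem {α : Type*} [DecidableEq α] {a b : α} {s t : Finset α}
    (ha : a ∉ t) : b ∈ insert a (s \ t) ↔ b ∈ insert a s ∧ b ∉ t := by
  rw [← insert_sdiff_of_notMem s ha, mem_sdiff]

theorem card_eq_sum_card_mul_card_of_piecewise {ι γ : Type*} [DecidableEq ι] (z : γ)
    {F : Finset (ι → γ)} {P : Finset (Finset ι)} {key : (ι → γ) → Finset ι}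
    {G H : Finset ι → Finset (ι → γ)} (hkey : ∀ f ∈ F, key f ∈ P)
    (hG : ∀ f ∈ F, (key f).piecewise f (fun _ => z) ∈ G (key f))
    (hH : ∀ f ∈ F, (key f).piecewise (fun _ => z) f ∈ H (key f))
    (hF : ∀ A ∈ P, ∀ g ∈ G A, ∀ h ∈ H A, A.piecewise g h ∈ F ∧ key (A.piecewise g h) = A)
    (hGz : ∀ A ∈ P, ∀ g ∈ G A, ∀ i ∉ A, g i = z) (hHz : ∀ A ∈ P, ∀ h ∈ H A, ∀ i ∈ A, h i = z) :
    #F = ∑ A ∈ P, #(G A) * #(H A) := by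
  rw [card_eq_sum_card_fiberwise hkey]
  refine sum_congr rfl fun A hA => ?_
  rw [← card_product]
  refine card_nbij' (fun f => (A.piecewise f fun _ => z, A.piecewise (fun _ => z) f))
    (fun gh => A.piecewise gh.1 gh.2) ?_ ?_ ?_ ?_
  · intro f hf
    obtain ⟨hfF, rfl⟩ := mem_filter.1 hf
    exact mk_mem_product (hG f hfF) (hH f hfF)
  · rintro ⟨g, h⟩ hgh
    obtain ⟨hg, hh⟩ := mem_product.1 hgh
    exact mem_filter.2 (hF A hA g hg h hh)
  · intro f _
    ext i
    by_cases hi : i ∈ A <;> simp [hi]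
  · rintro ⟨g, h⟩ hgh
    obtain ⟨hg, hh⟩ := mem_product.1 hgh
    refine Prod.ext ?_ ?_ <;> ext i <;> by_cases hi : i ∈ A <;>
      simp [hi, hGz A hA g hg, hHz A hA h hh]

section WeightedMaps

variable {V : Type*} [LinearOrder V] (α β : ℕ)

/-- The number of weights allowed on the edge from the child `v` to its parent `u`; loops
(`u = v`, which occur only in `maps`) get `α`. -/
def edgeBound (u v : V) : ℕ := if u ≤ v then α else β

def Weighted (f : V → Option (V × ℕ)) : Prop :=
  ∀ v u k, f v = some (u, k) → k ∈ Icc 1 (edgeBound α β u v)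

def edges (C : Finset V) (v : V) : Finset (V × ℕ) :=
  C.biUnion fun u => (Icc 1 (edgeBound α β u v)).map (Function.Embedding.sectR u ℕ)

variable {α β}

lemma Weighted.piecewise {f g : V → Option (V × ℕ)} (hf : Weighted α β f) (hg : Weighted α β g)
    (A : Finset V) : Weighted α β (A.piecewise f g) := by
  intro v
  by_cases hv : v ∈ A
  · simpa [hv] using hf v
  · simpa [hv] using hg v

lemma Weighted.update_none {f : V → Option (V × ℕ)} (hf : Weighted α β f) (t : V) :
    Weighted α β (Function.update f t none) := by
  intro v u k h
  by_cases hv : v = t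
  · simp [hv] at h
  · exact hf v u k (by rwa [Function.update_of_ne hv] at h)

lemma weighted_none : Weighted α β (fun _ : V => (none : Option (V × ℕ))) := by
  simp [Weighted]

lemma mem_edges {C : Finset V} {v u : V} {k : ℕ} :
    (u, k) ∈ edges α β C v ↔ u ∈ C ∧ k ∈ Icc 1 (edgeBound α β u v) := by
  simp [edges]

lemma card_edges (C : Finset V) (v : V) : #(edges α β C v) = ∑ u ∈ C, edgeBound α β u v := by
  rw [edges, card_biUnion]
  · simp
  · intro u _ u' _ huu'
    simp only [disjoint_left, mem_map, Function.Embedding.sectR_apply]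
    rintro _ ⟨k, -, rfl⟩ ⟨k', -, h⟩
    exact huu' (congrArg Prod.fst h).symm

variable [Fintype V] (α β)

def partialMaps (C D : Finset V) : Finset (V → Option (V × ℕ)) :=
  Fintype.piFinset fun v => if v ∈ D then insertNone (edges α β C v) else {none}

def maps (C D : Finset V) : Finset (V → Option (V × ℕ)) :=
  Fintype.piFinset fun v => if v ∈ D then (edges α β C v).map .some else {none}

variable {α β} {C D : Finset V} {f : V → Option (V × ℕ)}

lemma mem_partialMaps :
    f ∈ partialMaps α β C D ↔
      (∀ v ∉ D, f v = none) ∧ (∀ v u, Parent f v u → u ∈ C) ∧ Weighted α β f := by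
  simp only [partialMaps, Fintype.mem_piFinset, Parent, Weighted]
  constructor
  · intro h
    refine ⟨fun v hv => by simpa [hv] using h v, fun v u ⟨k, hk⟩ => ?_, fun v u k hk => ?_⟩ <;>
    · have := h v
      split_ifs at this <;> simp_all [mem_insertNone, mem_edges]
  · rintro ⟨hD, hC, hw⟩ v
    split_ifs with hv
    · rw [mem_insertNone]
      rintro ⟨u, k⟩ hk
      exact mem_edges.2 ⟨hC v u ⟨k, hk⟩, hw v u k hk⟩
    · simp [hD v hv]

lemma mem_maps :
    f ∈ maps α β C D ↔ (∀ v ∉ D, f v = none) ∧ (∀ v u, Parent f v u → u ∈ C) ∧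
      Weighted α β f ∧ ∀ v ∈ D, f v ≠ none := by
  have key : ∀ v, (f v ∈ if v ∈ D then (edges α β C v).map .some else {none}) ↔
      (f v ∈ if v ∈ D then insertNone (edges α β C v) else {none}) ∧ (v ∈ D → f v ≠ none) := by
    intro v
    by_cases hv : v ∈ D <;> rcases f v with _ | e <;> simp [hv, mem_insertNone]
  rw [← and_assoc, ← and_assoc, and_assoc (a := ∀ v ∉ D, f v = none), ← mem_partialMaps]
  simp only [maps, partialMaps, Fintype.mem_piFinset, key, forall_and]

lemma card_maps (C D : Finset V) : #(maps α β C D) = ∏ v ∈ D, ∑ u ∈ C, edgeBound α β u v := by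
  classical
  rw [maps, Fintype.card_piFinset, ← Fintype.prod_ite_mem D]
  refine prod_congr rfl fun v _ => ?_
  split_ifs <;> simp [card_edges]

lemma card_maps_self (hD : D.Nonempty) :
    #(maps α β D D) = #D * α * #(maps α β D (D.erase (D.max' hD))) := by
  rw [card_maps, card_maps, ← mul_prod_erase D _ (D.max'_mem hD)]
  congr 1
  rw [← smul_eq_mul, ← sum_const]
  refine sum_congr rfl fun u hu => ?_
  simp [edgeBound, D.le_max' u hu]

end WeightedMaps

section Trees

variable {V : Type*} [LinearOrder V] [Fintype V] (α β : ℕ)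

open Classical in
noncomputable def rootedAt (t : V) (A : Finset V) : Finset (V → Option (V × ℕ)) :=
  (maps α β (insert t A) A).filter fun f => ∀ v ∈ A, Reaches f v t

open Classical in
noncomputable def trees (S : Finset V) : Finset (V → Option (V × ℕ)) :=
  (partialMaps α β S S).filter fun f => ∃ r ∈ S, f r = none ∧ ∀ v ∈ S, Reaches f v r

open Classical in
noncomputable def leafTrees (t : V) (D : Finset V) : Finset (V → Option (V × ℕ)) :=
  (trees α β (insert t D)).filter fun f => ∀ v, ¬Parent f v t

variable {α β} {t : V} {A D S : Finset V} {f g h : V → Option (V × ℕ)}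

lemma mem_rootedAt :
    g ∈ rootedAt α β t A ↔ (∀ v ∉ A, g v = none) ∧ (∀ v u, Parent g v u → u ∈ insert t A) ∧
      Weighted α β g ∧ (∀ v ∈ A, g v ≠ none) ∧ ∀ v ∈ A, Reaches g v t := by
  simp only [rootedAt, mem_filter, mem_maps, and_assoc]

lemma mem_trees :
    f ∈ trees α β S ↔ (∀ v ∉ S, f v = none) ∧ (∀ v u, Parent f v u → u ∈ S) ∧
      Weighted α β f ∧ ∃ r ∈ S, f r = none ∧ ∀ v ∈ S, Reaches f v r := by
  simp only [trees, mem_filter, mem_partialMaps, and_assoc]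

lemma mem_leafTrees :
    f ∈ leafTrees α β t D ↔ f ∈ trees α β (insert t D) ∧ ∀ v, ¬Parent f v t := by
  simp only [leafTrees, mem_filter]

lemma parent_mem_of_mem_leafTrees (hf : f ∈ leafTrees α β t D) {v u : V} (hvu : Parent f v u) :
    u ∈ D := by
  obtain ⟨hf, hleaf⟩ := mem_leafTrees.1 hf
  exact (mem_insert.1 ((mem_trees.1 hf).2.1 v u hvu)).resolve_left fun hut => hleaf v (hut ▸ hvu)

lemma Reaches.piecewise_of_mem_rootedAt (hg : g ∈ rootedAt α β t A) {v : V} (hv : v ∈ A) :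
    Reaches (A.piecewise g h) v t := by
  obtain ⟨-, hgC, -, -, hgt⟩ := mem_rootedAt.1 hg
  exact (hgt v hv).of_eqOn
    (fun a ha hat => piecewise_eq_of_mem _ _ _ (mem_of_mem_insert_of_ne ha hat))
    (fun a _ _ b hab => hgC a b hab) (mem_insert_of_mem hv)

lemma reachSet_piecewise (ht : t ∉ D) (hAD : A ⊆ D) (hg : g ∈ rootedAt α β t A)
    (hh : ∀ v ∈ D \ A, ∀ u, Parent h v u → u ∈ D \ A) :
    reachSet (A.piecewise g h) t D = A := by
  ext v
  rw [mem_reachSet]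
  refine ⟨fun ⟨hvD, hvt⟩ => ?_, fun hv => ⟨hAD hv, .piecewise_of_mem_rootedAt hg hv⟩⟩
  by_contra hvA
  have hclosed : ∀ a ∈ D \ A, ∀ b, Parent (A.piecewise g h) a b → b ∈ D \ A := by
    intro a ha b hab
    rw [parent_piecewise, if_neg (mem_sdiff.1 ha).2] at hab
    exact hh a ha b hab
  exact ht (mem_sdiff.1 (hvt.mem_of_closed hclosed (mem_sdiff.2 ⟨hvD, hvA⟩))).1

lemma piecewise_reachSet_mem_rootedAt (ht : t ∉ D) (hC : ∀ v u, Parent f v u → u ∈ insert t D)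
    (hw : Weighted α β f) :
    (reachSet f t D).piecewise f (fun _ => none) ∈ rootedAt α β t (reachSet f t D) := by
  set A := reachSet f t D
  have hA : ∀ a ∈ A, ∀ b, Parent f a b → b ∈ insert t A := by
    intro a ha b hab
    obtain ⟨haD, hat⟩ := mem_reachSet.1 ha
    have hbt := hat.of_parent hab (ne_of_mem_of_not_mem haD ht)
    rcases mem_insert.1 (hC a b hab) with rfl | hb
    · exact mem_insert_self _ _
    · exact mem_insert_of_mem (mem_reachSet.2 ⟨hb, hbt⟩)
  have hagree : ∀ a ∈ A, A.piecewise f (fun _ => none) a = f a :=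
    fun a ha => piecewise_eq_of_mem _ _ _ ha
  refine mem_rootedAt.2 ⟨fun v hv => piecewise_eq_of_notMem _ _ _ hv, fun v u hvu => ?_,
    hw.piecewise weighted_none A, fun v hv hnone => ?_, fun v hv => ?_⟩
  · rw [parent_piecewise] at hvu
    split_ifs at hvu with hv
    · exact hA v hv u hvu
    · exact absurd hvu not_parent_none
  · rw [hagree v hv] at hnone
    obtain ⟨hvD, hvt⟩ := mem_reachSet.1 hv
    exact ht (hvt.eq_of_eq_none hnone ▸ hvD)
  · exact (mem_reachSet.1 hv).2.of_eqOn
      (fun a ha hat => hagree a (mem_of_mem_insert_of_ne ha hat))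
      (fun a ha hat => hA a (mem_of_mem_insert_of_ne ha hat)) (mem_insert_of_mem hv)

lemma piecewise_reachSet_compl_mem_maps (hf : f ∈ maps α β (insert t D) D) :
    (reachSet f t D).piecewise (fun _ => none) f ∈
      maps α β (D \ reachSet f t D) (D \ reachSet f t D) := by
  obtain ⟨hD, hC, hw, hne⟩ := mem_maps.1 hf
  set A := reachSet f t D
  refine mem_maps.2 ⟨fun v hv => ?_, fun v u hvu => ?_, weighted_none.piecewise hw A,
    fun v hv => ?_⟩
  · by_cases hvA : v ∈ A
    · exact piecewise_eq_of_mem _ _ _ hvA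
    · rw [piecewise_eq_of_notMem _ _ _ hvA]
      exact hD v fun hvD => hv (mem_sdiff.2 ⟨hvD, hvA⟩)
  · rw [parent_piecewise] at hvu
    split_ifs at hvu with hvA
    · exact absurd hvu not_parent_none
    · exact mem_sdiff_reachSet_of_parent hC hvu fun hut =>
        hvA (mem_reachSet.2 ⟨mem_of_parent hD hvu, .head hvu hut⟩)
  · rw [piecewise_eq_of_notMem _ _ _ (mem_sdiff.1 hv).2]
    exact hne v (mem_sdiff.1 hv).1

lemma piecewise_mem_maps (hAD : A ⊆ D) (hg : g ∈ rootedAt α β t A)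
    (hh : h ∈ maps α β (D \ A) (D \ A)) : A.piecewise g h ∈ maps α β (insert t D) D := by
  obtain ⟨-, hgC, hgw, hgne, -⟩ := mem_rootedAt.1 hg
  obtain ⟨hhD, hhC, hhw, hhne⟩ := mem_maps.1 hh
  refine mem_maps.2 ⟨fun v hv => ?_, fun v u hvu => ?_, hgw.piecewise hhw A, fun v hv => ?_⟩
  · rw [piecewise_eq_of_notMem _ _ _ fun hvA => hv (hAD hvA)]
    exact hhD v fun h => hv (mem_sdiff.1 h).1
  · rw [parent_piecewise] at hvu
    split_ifs at hvu
    · exact insert_subset_insert t hAD (hgC v u hvu)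
    · exact mem_insert_of_mem (mem_sdiff.1 (hhC v u hvu)).1
  · by_cases hvA : v ∈ A
    · rw [piecewise_eq_of_mem _ _ _ hvA]
      exact hgne v hvA
    · rw [piecewise_eq_of_notMem _ _ _ hvA]
      exact hhne v (mem_sdiff.2 ⟨hv, hvA⟩)

theorem card_maps_insert (ht : t ∉ D) :
    #(maps α β (insert t D) D) =
      ∑ A ∈ D.powerset, #(rootedAt α β t A) * #(maps α β (D \ A) (D \ A)) := by
  refine card_eq_sum_card_mul_card_of_piecewise none (key := (reachSet · t D))
    (fun f _ => mem_powerset.2 reachSet_subset) (fun f hf => ?_)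
    (fun f hf => piecewise_reachSet_compl_mem_maps hf) (fun A hA g hg h hh => ?_)
    (fun A _ g hg => (mem_rootedAt.1 hg).1) (fun A _ h hh i hi => ?_)
  · obtain ⟨-, hC, hw, -⟩ := mem_maps.1 hf
    exact piecewise_reachSet_mem_rootedAt ht hC hw
  · have hAD := mem_powerset.1 hA
    exact ⟨piecewise_mem_maps hAD hg hh,
      reachSet_piecewise ht hAD hg fun v _ u hvu => (mem_maps.1 hh).2.1 v u hvu⟩
  · exact (mem_maps.1 hh).1 i fun h => (mem_sdiff.1 h).2 hi

lemma piecewise_reachSet_compl_mem_leafTrees (ht : t ∉ D) (hf : f ∈ trees α β (insert t D)) :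
    (reachSet f t D).piecewise (fun _ => none) f ∈ leafTrees α β t (D \ reachSet f t D) := by
  obtain ⟨hS, hC, hw, r, hrS, hr, hreach⟩ := mem_trees.1 hf
  set A := reachSet f t D
  have hU : ∀ v, v ∈ insert t (D \ A) ↔ v ∈ insert t D ∧ v ∉ A :=
    fun v => mem_insert_sdiff_iff_of_notMem fun h => ht (reachSet_subset h)
  have hclosed : ∀ v ∈ insert t D, v ∉ A → ∀ u, Parent f v u → u ∈ D \ A := by
    intro v hv hvA u hvu
    refine mem_sdiff_reachSet_of_parent hC hvu fun hut => ?_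
    rcases mem_insert.1 hv with rfl | hvD
    · exact (hreach v hv).not_reaches_of_parent hr hvu hut
    · exact hvA (mem_reachSet.2 ⟨hvD, .head hvu hut⟩)
  have hrA : r ∉ A := fun hrA =>
    ht ((mem_reachSet.1 hrA).2.eq_of_eq_none hr ▸ (mem_reachSet.1 hrA).1)
  have hagree : ∀ a ∉ A, A.piecewise (fun _ => none) f a = f a :=
    fun a ha => piecewise_eq_of_notMem _ _ _ ha
  have hparent : ∀ v u, Parent (A.piecewise (fun _ => none) f) v u → u ∈ D \ A := by
    intro v u hvu
    rw [parent_piecewise] at hvu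
    split_ifs at hvu with hvA
    · exact absurd hvu not_parent_none
    · exact hclosed v (mem_of_parent hS hvu) hvA u hvu
  refine mem_leafTrees.2 ⟨mem_trees.2 ⟨fun v hv => ?_,
    fun v u hvu => mem_insert_of_mem (hparent v u hvu), weighted_none.piecewise hw A, r,
    (hU r).2 ⟨hrS, hrA⟩, (hagree r hrA).trans hr, fun v hv => ?_⟩,
    fun v hvt => ht (mem_sdiff.1 (hparent v t hvt)).1⟩
  · by_cases hvA : v ∈ A
    · exact piecewise_eq_of_mem _ _ _ hvA
    · rw [hagree v hvA]
      exact hS v fun hvS => hv ((hU v).2 ⟨hvS, hvA⟩)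
  · exact (hreach v ((hU v).1 hv).1).of_eqOn (fun a ha _ => hagree a ((hU a).1 ha).2)
      (fun a ha _ b hab => mem_insert_of_mem (hclosed a ((hU a).1 ha).1 ((hU a).1 ha).2 b hab)) hv

lemma piecewise_mem_trees (ht : t ∉ D) (hAD : A ⊆ D) (hg : g ∈ rootedAt α β t A)
    (hh : h ∈ leafTrees α β t (D \ A)) : A.piecewise g h ∈ trees α β (insert t D) := by
  obtain ⟨-, hgC, hgw, -, -⟩ := mem_rootedAt.1 hg
  obtain ⟨hhS, hhC, hhw, r, hrU, hr, hreach⟩ := mem_trees.1 (mem_leafTrees.1 hh).1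
  have hU : ∀ v, v ∈ insert t (D \ A) ↔ v ∈ insert t D ∧ v ∉ A :=
    fun v => mem_insert_sdiff_iff_of_notMem fun h => ht (hAD h)
  have hagree : ∀ a ∈ insert t (D \ A), A.piecewise g h a = h a :=
    fun a ha => piecewise_eq_of_notMem _ _ _ ((hU a).1 ha).2
  have hreachU : ∀ v ∈ insert t (D \ A), Reaches (A.piecewise g h) v r := fun v hv =>
    (hreach v hv).of_eqOn (fun a ha _ => hagree a ha) (fun a _ _ b hab => hhC a b hab) hv
  refine mem_trees.2 ⟨fun v hv => ?_, fun v u hvu => ?_, hgw.piecewise hhw A, r,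
    ((hU r).1 hrU).1, (hagree r hrU).trans hr, fun v hv => ?_⟩
  · rw [piecewise_eq_of_notMem _ _ _ fun hvA => hv (mem_insert_of_mem (hAD hvA))]
    exact hhS v fun hvU => hv ((hU v).1 hvU).1
  · rw [parent_piecewise] at hvu
    split_ifs at hvu
    · exact insert_subset_insert t hAD (hgC v u hvu)
    · exact ((hU u).1 (hhC v u hvu)).1
  · by_cases hvA : v ∈ A
    · exact (Reaches.piecewise_of_mem_rootedAt hg hvA).trans (hreachU t (mem_insert_self _ _))
    · exact hreachU v ((hU v).2 ⟨hv, hvA⟩)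

theorem card_trees_insert (ht : t ∉ D) :
    #(trees α β (insert t D)) =
      ∑ A ∈ D.powerset, #(rootedAt α β t A) * #(leafTrees α β t (D \ A)) := by
  refine card_eq_sum_card_mul_card_of_piecewise none (key := (reachSet · t D))
    (fun f _ => mem_powerset.2 reachSet_subset) (fun f hf => ?_)
    (fun f hf => piecewise_reachSet_compl_mem_leafTrees ht hf) (fun A hA g hg h hh => ?_)
    (fun A _ g hg => (mem_rootedAt.1 hg).1) (fun A hA h hh i hi => ?_)
  · obtain ⟨-, hC, hw, -⟩ := mem_trees.1 hf
    exact piecewise_reachSet_mem_rootedAt ht hC hw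
  · have hAD := mem_powerset.1 hA
    exact ⟨piecewise_mem_trees ht hAD hg hh,
      reachSet_piecewise ht hAD hg fun v _ u hvu => parent_mem_of_mem_leafTrees hh hvu⟩
  · refine (mem_trees.1 (mem_leafTrees.1 hh).1).1 i fun hi' => ?_
    exact ((mem_insert_sdiff_iff_of_notMem fun h => ht (mem_powerset.1 hA h)).1 hi').2 hi

lemma card_leafTrees_empty (t : V) : #(leafTrees α β t ∅) = 1 := by
  refine card_eq_one.2 ⟨fun _ => none, eq_singleton_iff_unique_mem.2 ⟨?_, fun f hf => ?_⟩⟩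
  · refine mem_leafTrees.2 ⟨mem_trees.2 ⟨fun _ _ => rfl, fun _ _ h => absurd h not_parent_none,
      weighted_none, t, mem_insert_self _ _, rfl, fun v hv => ?_⟩, fun _ => not_parent_none⟩
    rw [insert_empty, mem_singleton] at hv
    exact hv ▸ .refl
  · funext v
    rcases hv : f v with _ | ⟨u, k⟩
    · rfl
    · exact absurd (parent_mem_of_mem_leafTrees hf ⟨k, hv⟩) (notMem_empty u)

lemma exists_root_mem_of_mem_leafTrees (hD : D.Nonempty) (ht : t ∉ D)
    (hf : f ∈ leafTrees α β t D) : ∃ r ∈ D, f r = none ∧ ∀ v ∈ insert t D, Reaches f v r := by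
  obtain ⟨hf, hleaf⟩ := mem_leafTrees.1 hf
  obtain ⟨-, -, -, r, hrS, hr, hreach⟩ := mem_trees.1 hf
  refine ⟨r, (mem_insert.1 hrS).resolve_left ?_, hr, hreach⟩
  rintro rfl
  obtain ⟨v, hv⟩ := hD
  rcases (hreach v (mem_insert_of_mem hv)).cases_tail with rfl | ⟨c, -, hc⟩
  · exact ht hv
  · exact hleaf c hc

lemma apply_ne_none_of_mem_leafTrees (hD : D.Nonempty) (ht : t ∉ D)
    (hf : f ∈ leafTrees α β t D) : f t ≠ none := by
  obtain ⟨r, hrD, -, hreach⟩ := exists_root_mem_of_mem_leafTrees hD ht hf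
  exact fun hft => ne_of_mem_of_not_mem hrD ht
    ((hreach t (mem_insert_self _ _)).eq_of_eq_none hft)

lemma update_none_mem_trees (hD : D.Nonempty) (ht : t ∉ D) (hf : f ∈ leafTrees α β t D) :
    Function.update f t none ∈ trees α β D := by
  obtain ⟨r, hrD, hr, hreach⟩ := exists_root_mem_of_mem_leafTrees hD ht hf
  obtain ⟨hS, -, hw, -⟩ := mem_trees.1 (mem_leafTrees.1 hf).1
  have hagree : ∀ a ∈ D, Function.update f t none a = f a :=
    fun a ha => Function.update_of_ne (ne_of_mem_of_not_mem ha ht) _ _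
  refine mem_trees.2 ⟨fun v hv => ?_,
    fun v b hvb => parent_mem_of_mem_leafTrees hf (parent_update_none.1 hvb).2,
    hw.update_none t, r, hrD, (hagree r hrD).trans hr, fun v hv => ?_⟩
  · by_cases hvt : v = t
    · simp [hvt]
    · rw [Function.update_of_ne hvt]
      exact hS v (by simp [hvt, hv])
  · exact (hreach v (mem_insert_of_mem hv)).of_eqOn (fun a ha _ => hagree a ha)
      (fun a _ _ b hab => parent_mem_of_mem_leafTrees hf hab) hv

lemma update_some_mem_leafTrees (hlt : ∀ v ∈ D, v < t) {u : V} {k : ℕ} (hu : u ∈ D)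
    (hk : k ∈ Icc 1 α) (hg : g ∈ trees α β D) :
    Function.update g t (some (u, k)) ∈ leafTrees α β t D := by
  have ht : t ∉ D := fun h => lt_irrefl t (hlt t h)
  obtain ⟨hS, hC, hw, r, hrD, hr, hreach⟩ := mem_trees.1 hg
  have hagree : ∀ a ∈ D, Function.update g t (some (u, k)) a = g a :=
    fun a ha => Function.update_of_ne (ne_of_mem_of_not_mem ha ht) _ _
  have hreachD : ∀ v ∈ D, Reaches (Function.update g t (some (u, k))) v r :=
    fun v hv => (hreach v hv).of_eqOn (fun a ha _ => hagree a ha)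
      (fun a _ _ b hab => hC a b hab) hv
  refine mem_leafTrees.2 ⟨mem_trees.2 ⟨fun v hv => ?_, fun v b hvb => ?_, fun v b k' h => ?_,
    r, mem_insert_of_mem hrD, (hagree r hrD).trans hr, fun v hv => ?_⟩, fun v hvt => ?_⟩
  · have hvt : v ≠ t := by rintro rfl; exact hv (mem_insert_self _ _)
    rw [Function.update_of_ne hvt]
    exact hS v fun h => hv (mem_insert_of_mem h)
  · rw [parent_update_some] at hvb
    split_ifs at hvb
    · rw [hvb]
      exact mem_insert_of_mem hu
    · exact mem_insert_of_mem (hC v b hvb)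
  · by_cases hvt : v = t
    · subst hvt
      obtain ⟨rfl, rfl⟩ : u = b ∧ k = k' := by simpa using h
      simpa [edgeBound, (hlt u hu).le] using hk
    · exact hw v b k' (by rwa [Function.update_of_ne hvt] at h)
  · rcases mem_insert.1 hv with rfl | hv
    · exact .head (parent_update_some.2 (by simp)) (hreachD u hu)
    · exact hreachD v hv
  · rw [parent_update_some] at hvt
    split_ifs at hvt
    · exact ht (hvt ▸ hu)
    · exact ht (hC v t hvt)

theorem card_leafTrees (hD : D.Nonempty) (hlt : ∀ v ∈ D, v < t) :
    #(leafTrees α β t D) = #D * α * #(trees α β D) := by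
  have ht : t ∉ D := fun h => lt_irrefl t (hlt t h)
  rw [show #D * α = #(D ×ˢ Icc 1 α) by simp, ← card_product]
  refine card_nbij' (fun f => ((f t).getD (t, 0), Function.update f t none))
    (fun x => Function.update x.2 t (some x.1)) (fun f hf => ?_) (fun x hx => ?_)
    (fun f hf => ?_) (fun x hx => ?_)
  · obtain ⟨⟨u, k⟩, hft⟩ := Option.ne_none_iff_exists'.1 (apply_ne_none_of_mem_leafTrees hD ht hf)
    have hu := parent_mem_of_mem_leafTrees hf ⟨k, hft⟩
    have hk := (mem_trees.1 (mem_leafTrees.1 hf).1).2.2.1 t u k hft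
    simp only [hft, Option.getD_some, mem_coe]
    exact mk_mem_product (mk_mem_product hu (by simpa [edgeBound, (hlt u hu).le] using hk))
      (update_none_mem_trees hD ht hf)
  · obtain ⟨⟨u, k⟩, g⟩ := x
    obtain ⟨⟨hu, hk⟩, hg⟩ : (u ∈ D ∧ k ∈ Icc 1 α) ∧ g ∈ trees α β D := by
      simpa only [mem_coe, mem_product] using hx
    exact update_some_mem_leafTrees hlt hu hk hg
  · obtain ⟨e, hft⟩ := Option.ne_none_iff_exists'.1 (apply_ne_none_of_mem_leafTrees hD ht hf)
    simp only [hft, Option.getD_some, Function.update_idem]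
    rw [← hft, Function.update_eq_self]
  · obtain ⟨⟨u, k⟩, g⟩ := x
    have hgt : g t = none := (mem_trees.1 (mem_product.1 hx).2).1 t ht
    simp [Function.update_idem, hgt]

theorem card_trees_eq_card_maps (S : Finset V) (hS : S.Nonempty) :
    #(trees α β S) = #(maps α β S (S.erase (S.max' hS))) := by
  induction S using Finset.strongInduction with
  | H S ih =>
  set t := S.max' hS
  set D := S.erase t
  have ht : t ∉ D := notMem_erase t S
  have hSD : insert t D = S := insert_erase (S.max'_mem hS)
  have hleaf : ∀ A ∈ D.powerset, #(leafTrees α β t (D \ A)) = #(maps α β (D \ A) (D \ A)) := by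
    intro A _
    have hlt : ∀ v ∈ D \ A, v < t :=
      fun v hv => S.lt_max'_of_mem_erase_max' hS (mem_sdiff.1 hv).1
    rcases (D \ A).eq_empty_or_nonempty with he | hne
    · rw [he, card_leafTrees_empty, card_maps, prod_empty]
    · have hsub : D \ A ⊂ S := ssubset_of_subset_of_ne (sdiff_subset.trans (erase_subset t S))
        fun h => lt_irrefl t (hlt t (h ▸ S.max'_mem hS))
      rw [card_leafTrees hne hlt, ih _ hsub hne, card_maps_self hne]
  calc #(trees α β S) = #(trees α β (insert t D)) := by rw [hSD]
    _ = ∑ A ∈ D.powerset, #(rootedAt α β t A) * #(leafTrees α β t (D \ A)) :=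
      card_trees_insert ht
    _ = ∑ A ∈ D.powerset, #(rootedAt α β t A) * #(maps α β (D \ A) (D \ A)) :=
      sum_congr rfl fun A hA => by rw [hleaf A hA]
    _ = #(maps α β (insert t D) D) := (card_maps_insert ht).symm
    _ = #(maps α β S D) := by rw [hSD]

end Trees

section Fin

variable {n α β : ℕ}

lemma sum_edgeBound_fin {m : ℕ} (v : Fin (m + 1)) :
    ∑ u, edgeBound α β u v = (v + 1) * α + (m - v) * β := by
  simp [edgeBound, sum_ite, filter_ge_eq_Iic, not_le, filter_lt_eq_Ioi, Fin.card_Iic, Fin.card_Ioi]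

lemma card_maps_fin (m : ℕ) :
    #(maps α β (univ : Finset (Fin (m + 1))) (univ.erase (Fin.last m))) =
      ∏ i ∈ Icc 1 m, (i * α + (m + 1 - i) * β) := by
  rw [card_maps, ← compl_singleton, ← Fin.image_castSucc,
    prod_image (Fin.castSucc_injective _).injOn]
  simp only [sum_edgeBound_fin, Fin.val_castSucc]
  rw [Fin.prod_univ_eq_prod_range (fun i => (i + 1) * α + (m - i) * β), range_eq_Ico,
    ← Ico_add_one_right_eq_Icc, ← prod_Ico_add' _ 0 m 1]
  refine prod_congr rfl fun i _ => ?_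
  congr 2
  omega

lemma mem_trees_univ {f : Fin n → Option (Fin n × ℕ)} :
    f ∈ trees α β univ ↔ Weighted α β f ∧ ∃ r, f r = none ∧ ∀ v, Reaches f v r := by
  simp [mem_trees]

lemma map_mem_trees_univ_iff {p : Fin n → Option (Fin n)} {w : Fin n → ℕ} :
    (fun v => (p v).map (·, w v)) ∈ trees α β univ ↔
      IsForest n p ∧
      (∀ j i, p j = some i →
        ((i : ℕ) < (j : ℕ) → w j ∈ Icc 1 α) ∧ ((j : ℕ) < (i : ℕ) → w j ∈ Icc 1 β)) ∧
      #(univ.filter fun j => p j = none) = 1 := by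
  set f := fun v => (p v).map (·, w v)
  have hforest : IsForest n p ↔ ∀ v, ∃ r, f r = none ∧ Reaches f v r := by
    rw [← exists_depth_iff_forall_exists_reaches]
    simp only [IsForest, f, parent_map_iff]
  have hR : ∀ v, v ∈ univ.filter (fun j => p j = none) ↔ f v = none := by simp [f]
  rw [mem_trees_univ]
  constructor
  · rintro ⟨hw, r, hr, hreach⟩
    have hroots : ∀ v, ∃ r, f r = none ∧ Reaches f v r := fun v => ⟨r, hr, hreach v⟩
    refine ⟨hforest.2 hroots, fun j i hji => ?_,
      (card_eq_one_iff_exists_forall_reaches hR hroots).2 ⟨r, hr, hreach⟩⟩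
    have hk := hw j i (w j) (by simp [f, hji])
    exact ⟨fun h => by simpa [edgeBound, (show i < j from h).le] using hk,
      fun h => by simpa [edgeBound, not_le.2 (show j < i from h)] using hk⟩
  · rintro ⟨hdepth, hwt, hcard⟩
    refine ⟨fun v u k h => ?_,
      (card_eq_one_iff_exists_forall_reaches hR (hforest.1 hdepth)).1 hcard⟩
    obtain ⟨hvu, rfl⟩ : p v = some u ∧ w v = k := by simpa [f] using h
    obtain ⟨d, hd⟩ := hdepth
    have hne : u ≠ v := fun h => lt_irrefl _ (h ▸ hd v u hvu)
    unfold edgeBound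
    split_ifs with huv
    · exact (hwt v u hvu).1 (lt_of_le_of_ne huv hne : u < v)
    · exact (hwt v u hvu).2 (lt_of_not_ge huv)

variable (n α β)

noncomputable def equivTrees : ABTree n α β ≃ trees α β (univ : Finset (Fin n)) where
  toFun t := ⟨fun v => (t.1.1.1 v).map (·, t.1.1.2 v),
    map_mem_trees_univ_iff.2 ⟨t.1.2.1, t.1.2.2.2, t.2⟩⟩
  invFun f :=
    let p : Fin n → Option (Fin n) := fun v => (f.1 v).map Prod.fst
    let w : Fin n → ℕ := fun v => ((f.1 v).map Prod.snd).getD 0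
    have h := (map_mem_trees_univ_iff (p := p) (w := w)).1 (by
      convert f.2 using 1
      funext v
      cases hv : f.1 v <;> simp [p, w, hv])
    ⟨⟨(p, w), h.1, fun j hj => by simp_all [p, w], h.2.1⟩, h.2.2⟩
  left_inv t := by
    refine Subtype.ext (Subtype.ext (Prod.ext (funext fun v => ?_) (funext fun v => ?_))) <;>
    cases hv : t.1.1.1 v <;> simp [hv, t.1.2.2.1 v]
  right_inv f := Subtype.ext (funext fun v => by cases hv : f.1 v <;> simp [hv])

end Fin

end ABTree

/-- The number of (α,β)-rooted labelled trees on n vertices equals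
∏_{i=1}^{n-1} (nβ + (α−β)i). -/
theorem abTree_count (n α β : ℕ) (hn : 1 ≤ n) :
    (Nat.card (ABTree n α β) : ℤ) =
      ∏ i ∈ Finset.Icc 1 (n - 1), ((n : ℤ) * β + ((α : ℤ) - β) * i) := by
  obtain ⟨m, rfl⟩ := Nat.exists_eq_add_of_le' hn
  have hlast : Finset.univ.max' Finset.univ_nonempty = Fin.last m :=
    le_antisymm (Fin.le_last _) (Finset.le_max' _ _ (Finset.mem_univ _))
  rw [Nat.card_congr (ABTree.equivTrees _ α β), Nat.card_eq_finsetCard,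
    ABTree.card_trees_eq_card_maps _ Finset.univ_nonempty, hlast, ABTree.card_maps_fin,
    Nat.cast_prod]
  refine Finset.prod_congr (by simp) fun i hi => ?_
  have := (Finset.mem_Icc.1 hi).2
  push_cast [Nat.cast_sub (by omega : i ≤ m + 1)]
  ring
end

section
/- The number of rooted labelled forests on vertex set {1,...,n} (forests of rooted trees) equals (n+1)^{n−1}. -/
/-!
Count more generally the forests on an `m`-set `V` whose roots are colored from an `r`-set `C`:
there are `r (m + r)^(m - 1)` of them. Deleting the set `S` of roots leaves a forest on `V \ S`
whose roots are colored by their former parents in `S`; this gives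
`F(m, r) = ∑_S r^|S| F(m - |S|, |S|)`, and the identity
`∑_k k (m choose k) r^k m^(m-k) = m r (m + r)^(m-1)` closes the induction.
Rooted forests are the case `r = 1`.
-/

open Finset

theorem sum_range_mul_choose_mul_pow {R : Type*} [CommSemiring R] (m : ℕ) (x y : R) :
    ∑ k ∈ range (m + 1), (k * m.choose k : R) * x ^ k * y ^ (m - k) =
      m * x * (x + y) ^ (m - 1) := by
  cases m with
  | zero => simp
  | succ t =>
    rw [sum_range_succ', add_pow, mul_sum]
    simp only [Nat.cast_zero, zero_mul, add_zero, Nat.add_sub_add_right, Nat.add_sub_cancel]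
    refine sum_congr rfl fun i _ => ?_
    have hchoose := congrArg (Nat.cast : ℕ → R) (Nat.add_one_mul_choose_eq t i)
    push_cast at hchoose ⊢
    rw [mul_comm (i + 1 : R), ← hchoose]
    ring

/-- `p v = inl w` makes `w` the parent of `v`, and `p v = inr c` makes `v` a root of color `c`;
equivalently, a rooted forest on `V ⊕ C` whose roots are exactly the points of `C`. -/
abbrev ColoredForest (V C : Type*) : Type _ :=
  {p : V → V ⊕ C // ∃ d : V → ℕ, ∀ j i, p j = .inl i → d i < d j}

universe u

variable {V C : Type*}

def Finset.complSumEquiv {α : Type*} [DecidableEq α] (s : Finset α) : {a // a ∉ s} ⊕ s ≃ α :=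
  (Equiv.sumComm _ _).trans (Equiv.sumCompl (· ∈ s))

@[simp] lemma Finset.complSumEquiv_inl {α : Type*} [DecidableEq α] {s : Finset α}
    (a : {a // a ∉ s}) : s.complSumEquiv (.inl a) = a := rfl

@[simp] lemma Finset.complSumEquiv_inr {α : Type*} [DecidableEq α] {s : Finset α} (a : s) :
    s.complSumEquiv (.inr a) = a := rfl

namespace ColoredForest

instance [IsEmpty V] : Unique (ColoredForest V C) where
  default := ⟨isEmptyElim, fun _ => 0, isEmptyElim⟩
  uniq _ := Subtype.ext (funext isEmptyElim)

theorem isEmpty_of_isEmpty_colors [Nonempty V] [IsEmpty C] : IsEmpty (ColoredForest V C) := by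
  refine ⟨fun ⟨p, d, hd⟩ => ?_⟩
  rcases h : p (Function.argmin d) with w | c
  · exact Function.not_lt_argmin d w (hd _ w h)
  · exact isEmptyElim c

def roots [Fintype V] (f : ColoredForest V C) : Finset V := univ.filter fun v => (f.1 v).isRight

lemma mem_roots [Fintype V] {f : ColoredForest V C} {v : V} : v ∈ f.roots ↔ (f.1 v).isRight := by
  simp [roots]

section Split

variable [Fintype V] [DecidableEq V] (S : Finset V)

def glue (c : S → C) (q : ColoredForest {v // v ∉ S} S) : ColoredForest V C := by
  refine ⟨fun v => if h : v ∈ S then .inr (c ⟨v, h⟩) else .inl (S.complSumEquiv (q.1 ⟨v, h⟩)), ?_⟩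
  obtain ⟨d, hd⟩ := q.2
  refine ⟨fun v => if h : v ∈ S then 0 else d ⟨v, h⟩ + 1, fun j i hji => ?_⟩
  by_cases hj : j ∈ S
  · simp [hj] at hji
  simp only [hj, dif_neg, not_false_eq_true, Sum.inl.injEq] at hji ⊢
  rcases hq : q.1 ⟨j, hj⟩ with w | s
  · rw [hq, complSumEquiv_inl] at hji
    subst hji
    simpa [w.2] using hd _ _ hq
  · rw [hq, complSumEquiv_inr] at hji
    subst hji
    simp

lemma roots_glue (c : S → C) (q : ColoredForest {v // v ∉ S} S) : (glue S c q).roots = S := by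
  ext v
  by_cases hv : v ∈ S <;> simp [mem_roots, glue, hv]

variable {S}

def rootColor {f : ColoredForest V C} (hf : f.roots = S) (s : S) : C :=
  (f.1 s).getRight (mem_roots.1 (hf ▸ s.2))

def nonRootForest {f : ColoredForest V C} (hf : f.roots = S) : ColoredForest {v // v ∉ S} S := by
  have hleft (v : {v // v ∉ S}) : (f.1 v).isLeft := Sum.not_isRight.1 (mt mem_roots.2 (hf ▸ v.2))
  refine ⟨fun v => (S.complSumEquiv).symm ((f.1 v).getLeft (hleft v)), ?_⟩
  obtain ⟨d, hd⟩ := f.2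
  refine ⟨fun v => d v, fun j i hji => hd j i ?_⟩
  rw [Equiv.symm_apply_eq, complSumEquiv_inl, Sum.getLeft_eq_iff] at hji
  exact hji

variable (S)

def rootSplitEquiv :
    {f : ColoredForest V C // f.roots = S} ≃ (S → C) × ColoredForest {v // v ∉ S} S where
  toFun f := (rootColor f.2, nonRootForest f.2)
  invFun cq := ⟨glue S cq.1 cq.2, roots_glue S cq.1 cq.2⟩
  left_inv := by
    rintro ⟨f, hf⟩
    ext v
    by_cases hv : v ∈ S
    · simp [glue, hv, rootColor]
    · simp [glue, hv, nonRootForest]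
  right_inv := by
    rintro ⟨c, q⟩
    ext s <;> simp [glue, rootColor, nonRootForest, s.2]

end Split

theorem card_eq_sum_roots [Fintype V] [Fintype C] :
    Nat.card (ColoredForest V C) =
      ∑ S : Finset V, Fintype.card C ^ #S * Nat.card (ColoredForest {v // v ∉ S} S) := by
  classical
  rw [← Nat.card_congr (Equiv.sigmaFiberEquiv roots), Nat.card_sigma]
  refine sum_congr rfl fun S _ => ?_
  rw [Nat.card_congr (rootSplitEquiv S), Nat.card_prod, Nat.card_fun]
  simp

/-- The count `r (m + r)^(m - 1)` in a form that is also correct for `m = 0`. -/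
theorem card_mul_card_add_card (V C : Type u) [Fintype V] [Fintype C] :
    Nat.card (ColoredForest V C) * (Fintype.card V + Fintype.card C) =
      Fintype.card C * (Fintype.card V + Fintype.card C) ^ Fintype.card V := by
  classical
  induction hm : Fintype.card V using Nat.strong_induction_on generalizing V C with
  | _ m ih =>
  rcases Nat.eq_zero_or_pos m with rfl | hm0
  · have : IsEmpty V := Fintype.card_eq_zero_iff.1 hm
    simp
  set r := Fintype.card C
  have hfiber (S : Finset V) :
      Nat.card (ColoredForest {v // v ∉ S} S) * m = #S * m ^ (m - #S) := by
    rcases S.eq_empty_or_nonempty with rfl | hS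
    · have : Nonempty {v : V // v ∉ (∅ : Finset V)} := Fintype.card_pos_iff.1 (by simp [hm, hm0])
      have : IsEmpty (ColoredForest {v : V // v ∉ (∅ : Finset V)} (∅ : Finset V)) :=
        isEmpty_of_isEmpty_colors
      rw [Nat.card_of_isEmpty, card_empty, zero_mul, zero_mul]
    · have hle : #S ≤ m := hm ▸ card_le_univ S
      have hcompl : Fintype.card {v // v ∉ S} = m - #S := by
        simp [Fintype.card_subtype_compl, hm]
      have := ih (m - #S) (by have := hS.card_pos; omega) {v // v ∉ S} S hcompl
      rwa [Fintype.card_coe, Nat.sub_add_cancel hle] at this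
  have hsum : Nat.card (ColoredForest V C) * m = r * (m + r) ^ (m - 1) * m := by
    calc Nat.card (ColoredForest V C) * m
        = ∑ S : Finset V, r ^ #S * (#S * m ^ (m - #S)) := by
          rw [card_eq_sum_roots, sum_mul]
          exact sum_congr rfl fun S _ => by rw [mul_assoc, hfiber]
      _ = ∑ k ∈ range (m + 1), (k * m.choose k) * r ^ k * m ^ (m - k) := by
          rw [← powerset_univ, sum_powerset_apply_card (fun k => r ^ k * (k * m ^ (m - k))),
            card_univ, hm]
          exact sum_congr rfl fun k _ => by rw [smul_eq_mul]; ring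
      _ = r * (m + r) ^ (m - 1) * m := by
          have := sum_range_mul_choose_mul_pow m r m
          simp only [Nat.cast_id] at this
          rw [this]
          ring
  rw [Nat.eq_of_mul_eq_mul_right hm0 hsum, mul_assoc, ← pow_succ, Nat.sub_add_cancel hm0]

end ColoredForest

def isForestEquiv (n : ℕ) :
    {p : Fin n → Option (Fin n) // IsForest n p} ≃ ColoredForest (Fin n) PUnit :=
  Equiv.subtypeEquiv (Equiv.arrowCongr (.refl _) (Equiv.optionEquivSumPUnit _)) fun p => by
    refine exists_congr fun d => forall₂_congr fun j i => imp_congr ?_ .rfl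
    change p j = some i ↔ Equiv.optionEquivSumPUnit _ (p j) = .inl i
    cases p j <;> simp

theorem rootedForest_count_general (n : ℕ) :
    Nat.card { p : Fin n → Option (Fin n) // IsForest n p } = (n + 1) ^ (n - 1) := by
  have h := ColoredForest.card_mul_card_add_card (Fin n) PUnit
  rw [Fintype.card_fin, Fintype.card_punit, one_mul, ← Nat.card_congr (isForestEquiv n)] at h
  cases n with
  | zero => simpa using h
  | succ n => exact Nat.eq_of_mul_eq_mul_right (n + 1).succ_pos (h.trans (pow_succ _ _))

/-- The number of rooted labelled forests on n vertices equals (n+1)^{n−1}. -/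
theorem rootedForest_count (n : ℕ) (hn : 1 ≤ n) :
    Nat.card { p : Fin n → Option (Fin n) // IsForest n p } = (n + 1) ^ (n - 1) :=
  rootedForest_count_general n
end

section
/- For a ≤ b with a+b=1 (i.e., a = 1−b, b ≥ 1), the number of (1−a, b)-rooted labelled forests on n vertices, counted with sign (−1)^{n−j} over the number j of trees and evaluated at q = −1 in absolute value, equals (bn+1)^{n−1}. -/
/-!
Recording each edge at its child, a `(b,b)`-forest is a rooted forest on `Fin n` with an
arbitrary choice of one of `b` weights on each of its edges, so the count is
`∑ₑ Fₑ bᵉ` where `Fₑ` is the number of rooted forests with `e` edges. Deleting an edge of a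
forest with `e + 1` edges gives a forest with `e` edges, a root `r` of it, and a vertex outside
the tree of `r`; conversely any such triple is joined back into a forest. Counting both sides,
`(e + 1) Fₑ₊₁ = n (n - e - 1) Fₑ`, whence `Fₑ = C(n-1, e) nᵉ`, and the binomial theorem gives
`∑ₑ C(n-1, e) (bn)ᵉ = (bn + 1)ⁿ⁻¹`.
-/

namespace RootedForest

open Finset Function

abbrev ParentMap (n : ℕ) := Fin n → Option (Fin n)

variable {n : ℕ}

def IsAncestor (p : ParentMap n) : Fin n → Fin n → Prop :=
  Relation.ReflTransGen fun x y => p x = some y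

def roots (p : ParentMap n) : Finset (Fin n) := univ.filter fun j => p j = none

def nonroots (p : ParentMap n) : Finset (Fin n) := univ.filter fun j => p j ≠ none

open Classical in
noncomputable def descendants (p : ParentMap n) (r : Fin n) : Finset (Fin n) :=
  univ.filter fun x => IsAncestor p x r

@[simp] lemma mem_roots {p : ParentMap n} {j : Fin n} : j ∈ roots p ↔ p j = none := by
  simp [roots]

@[simp] lemma mem_nonroots {p : ParentMap n} {j : Fin n} : j ∈ nonroots p ↔ p j ≠ none := by
  simp [nonroots]

@[simp] lemma mem_descendants {p : ParentMap n} {r x : Fin n} :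
    x ∈ descendants p r ↔ IsAncestor p x r := by
  simp [descendants]

lemma roots_eq_compl_nonroots (p : ParentMap n) : roots p = (nonroots p)ᶜ := by
  ext j; simp

lemma nonroots_update_none (p : ParentMap n) (j : Fin n) :
    nonroots (update p j none) = (nonroots p).erase j := by
  ext x
  rcases eq_or_ne x j with rfl | hx <;> simp [update_of_ne, *]

lemma nonroots_update_some (p : ParentMap n) (j i : Fin n) :
    nonroots (update p j (some i)) = insert j (nonroots p) := by
  ext x
  rcases eq_or_ne x j with rfl | hx <;> simp [update_of_ne, *]

lemma IsAncestor.depth_le {p : ParentMap n} {d : Fin n → ℕ}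
    (hd : ∀ j i, p j = some i → d i < d j) {x y : Fin n} (h : IsAncestor p x y) :
    d y ≤ d x := by
  induction h with
  | refl => exact le_rfl
  | tail _ hbc ih => exact (hd _ _ hbc).le.trans ih

lemma IsAncestor.of_update_none {p : ParentMap n} {j x y : Fin n}
    (h : IsAncestor (update p j none) x y) : IsAncestor p x y := by
  refine Relation.ReflTransGen.mono (fun a c hac => ?_) _ _ h
  rcases eq_or_ne a j with rfl | ha
  · simp at hac
  · rwa [update_of_ne ha] at hac

lemma exists_root_isAncestor {p : ParentMap n} (hF : IsForest n p) (x : Fin n) :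
    ∃ r, IsAncestor p x r ∧ p r = none := by
  obtain ⟨d, hd⟩ := hF
  induction hx : d x using Nat.strong_induction_on generalizing x with
  | _ m ih =>
    cases hp : p x with
    | none => exact ⟨x, .refl, hp⟩
    | some y =>
      obtain ⟨r, hr, hr0⟩ := ih (d y) (hx ▸ hd x y hp) y rfl
      exact ⟨r, .head hp hr, hr0⟩

/-- The parent relation is functional, so the ancestors of a vertex form a chain. -/
lemma root_isAncestor_unique {p : ParentMap n} {x r₁ r₂ : Fin n} (h₁ : IsAncestor p x r₁)
    (hr₁ : p r₁ = none) (h₂ : IsAncestor p x r₂) (hr₂ : p r₂ = none) : r₁ = r₂ := by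
  have hfun : Relator.RightUnique fun x y => p x = some y := fun _ _ _ h h' =>
    Option.some_injective _ (h.symm.trans h')
  rcases Relation.ReflTransGen.total_of_right_unique hfun h₁ h₂ with h | h
  · rcases h.cases_head with rfl | ⟨c, hc, _⟩
    · rfl
    · simp [hr₁] at hc
  · rcases h.cases_head with rfl | ⟨c, hc, _⟩
    · rfl
    · simp [hr₂] at hc

lemma sum_card_descendants_roots {p : ParentMap n} (hF : IsForest n p) :
    ∑ r ∈ roots p, #(descendants p r) = n := by
  classical
  have hdisj : (roots p : Set (Fin n)).PairwiseDisjoint (descendants p) :=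
    fun r₁ h₁ r₂ h₂ hne => disjoint_left.2 fun x hx₁ hx₂ =>
      hne (root_isAncestor_unique (mem_descendants.1 hx₁) (mem_roots.1 h₁)
        (mem_descendants.1 hx₂) (mem_roots.1 h₂))
  have hcover : (roots p).biUnion (descendants p) = univ := by
    refine eq_univ_of_forall fun x => ?_
    obtain ⟨r, hr, hr0⟩ := exists_root_isAncestor hF x
    exact mem_biUnion.2 ⟨r, mem_roots.2 hr0, mem_descendants.2 hr⟩
  rw [← card_biUnion hdisj, hcover, card_univ, Fintype.card_fin]

lemma isForest_update_none {p : ParentMap n} (hF : IsForest n p) (j : Fin n) :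
    IsForest n (update p j none) := by
  obtain ⟨d, hd⟩ := hF
  refine ⟨d, fun x y hxy => hd x y ?_⟩
  rcases eq_or_ne x j with rfl | hx
  · simp at hxy
  · rwa [update_of_ne hx] at hxy

/-- The tree hanging below `j` is lifted above the depth of `i`. -/
lemma isForest_update_some {p : ParentMap n} (hF : IsForest n p) {j i : Fin n}
    (hij : ¬ IsAncestor p i j) : IsForest n (update p j (some i)) := by
  classical
  obtain ⟨d, hd⟩ := hF
  refine ⟨fun x => if IsAncestor p x j then d x + (d i + 1) else d x, fun x y hxy => ?_⟩
  rcases eq_or_ne x j with rfl | hx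
  · obtain rfl : i = y := by simpa using hxy
    have hxx : IsAncestor p x x := .refl
    simp only [hij, hxx, if_false, if_true]
    omega
  rw [update_of_ne hx] at hxy
  by_cases hxj : IsAncestor p x j
  · have hyj : IsAncestor p y j := by
      rcases hxj.cases_head with rfl | ⟨c, hc, hcj⟩
      · exact absurd rfl hx
      · exact (Option.some_injective _ (hxy.symm.trans hc)) ▸ hcj
    simp only [hxj, hyj, if_true]
    have := hd x y hxy
    omega
  · have hyj : ¬ IsAncestor p y j := fun h => hxj (.head hxy h)
    simpa [hxj, hyj] using hd x y hxy

open Classical in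
noncomputable def forests (n : ℕ) : Finset (ParentMap n) := univ.filter (IsForest n)

noncomputable def forestsWithEdges (n e : ℕ) : Finset (ParentMap n) :=
  (forests n).filter fun p => #(nonroots p) = e

@[simp] lemma mem_forests {p : ParentMap n} : p ∈ forests n ↔ IsForest n p := by
  simp [forests]

@[simp] lemma mem_forestsWithEdges {e : ℕ} {p : ParentMap n} :
    p ∈ forestsWithEdges n e ↔ IsForest n p ∧ #(nonroots p) = e := by
  simp [forestsWithEdges]

lemma forestsWithEdges_zero (n : ℕ) : forestsWithEdges n 0 = {fun _ => none} := by
  ext p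
  simp only [mem_forestsWithEdges, mem_singleton, card_eq_zero]
  constructor
  · rintro ⟨-, hp⟩
    funext j
    simpa [hp] using (mem_nonroots (p := p) (j := j)).not
  · rintro rfl
    exact ⟨⟨fun _ => 0, fun _ _ h => by cases h⟩, by ext; simp⟩

/-- The default of `getD` is never used: `cutEdge` is only applied at non-roots `j`. -/
def cutEdge (x : Σ _ : ParentMap n, Fin n) : Σ _ : ParentMap n, Σ _ : Fin n, Fin n :=
  ⟨update x.1 x.2 none, x.2, (x.1 x.2).getD x.2⟩

def joinEdge (y : Σ _ : ParentMap n, Σ _ : Fin n, Fin n) : Σ _ : ParentMap n, Fin n :=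
  ⟨update y.1 y.2.1 (some y.2.2), y.2.1⟩

lemma card_sigma_nonroots (e : ℕ) :
    #((forestsWithEdges n e).sigma nonroots) = e * #(forestsWithEdges n e) := by
  rw [card_sigma, sum_congr rfl fun p hp => (mem_forestsWithEdges.1 hp).2, sum_const,
    smul_eq_mul, mul_comm]

lemma card_sigma_compl_descendants (e : ℕ) :
    #((forestsWithEdges n e).sigma fun p => (roots p).sigma fun r => (descendants p r)ᶜ) =
      n * (n - e - 1) * #(forestsWithEdges n e) := by
  rw [card_sigma, mul_comm, ← smul_eq_mul, ← sum_const]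
  refine sum_congr rfl fun p hp => ?_
  obtain ⟨hF, hp⟩ := mem_forestsWithEdges.1 hp
  have hroots : #(roots p) = n - e := by
    rw [roots_eq_compl_nonroots, card_compl, Fintype.card_fin, hp]
  simp_rw [card_sigma, card_compl, Fintype.card_fin]
  rw [sum_tsub_distrib _ fun r _ => by simpa using card_le_univ (descendants p r),
    sum_card_descendants_roots hF, sum_const, hroots, smul_eq_mul, Nat.mul_sub_one, mul_comm n]

lemma mapsTo_cutEdge (e : ℕ) :
    Set.MapsTo (cutEdge (n := n)) ↑((forestsWithEdges n (e + 1)).sigma nonroots)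
      ↑((forestsWithEdges n e).sigma fun p => (roots p).sigma fun r => (descendants p r)ᶜ) := by
  rintro ⟨p, j⟩ h
  simp only [coe_sigma, Set.mem_sigma_iff, mem_coe, mem_forestsWithEdges, mem_nonroots] at h
  obtain ⟨⟨hF, hcard⟩, hj⟩ := h
  obtain ⟨i, hi⟩ := Option.ne_none_iff_exists'.1 hj
  simp only [cutEdge, coe_sigma, Set.mem_sigma_iff, mem_coe, mem_forestsWithEdges,
    mem_roots, mem_compl, mem_descendants, update_self, hi, Option.getD_some]
  refine ⟨⟨isForest_update_none hF j, ?_⟩, trivial, fun hij => ?_⟩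
  · rw [nonroots_update_none, card_erase_of_mem (mem_nonroots.2 hj), hcard, Nat.add_sub_cancel]
  · obtain ⟨d, hd⟩ := hF
    exact absurd (hij.of_update_none.depth_le hd) (not_le.2 (hd j i hi))

lemma mapsTo_joinEdge (e : ℕ) :
    Set.MapsTo (joinEdge (n := n))
      ↑((forestsWithEdges n e).sigma fun p => (roots p).sigma fun r => (descendants p r)ᶜ)
      ↑((forestsWithEdges n (e + 1)).sigma nonroots) := by
  rintro ⟨q, r, i⟩ h
  simp only [coe_sigma, Set.mem_sigma_iff, mem_coe, mem_forestsWithEdges, mem_roots,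
    mem_compl, mem_descendants] at h
  obtain ⟨⟨hF, hcard⟩, hr, hi⟩ := h
  simp only [joinEdge, coe_sigma, Set.mem_sigma_iff, mem_coe, mem_forestsWithEdges,
    mem_nonroots, update_self]
  refine ⟨⟨isForest_update_some hF hi, ?_⟩, Option.some_ne_none i⟩
  rw [nonroots_update_some, card_insert_of_notMem (by simpa using hr), hcard]

lemma card_forestsWithEdges_succ (e : ℕ) :
    (e + 1) * #(forestsWithEdges n (e + 1)) = n * (n - e - 1) * #(forestsWithEdges n e) := by
  rw [← card_sigma_nonroots, ← card_sigma_compl_descendants]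
  refine card_nbij' cutEdge joinEdge (mapsTo_cutEdge e) (mapsTo_joinEdge e) ?_ ?_
  · rintro ⟨p, j⟩ h
    obtain ⟨i, hi⟩ : ∃ i, p j = some i :=
      Option.ne_none_iff_exists'.1 (mem_nonroots.1 (mem_sigma.1 h).2)
    simp [cutEdge, joinEdge, hi]
  · rintro ⟨q, r, i⟩ h
    have hr : q r = none := mem_roots.1 (mem_sigma.1 (mem_sigma.1 h).2).1
    simp [cutEdge, joinEdge, ← hr]

lemma card_forestsWithEdges (n e : ℕ) :
    #(forestsWithEdges n e) = (n - 1).choose e * n ^ e := by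
  induction e with
  | zero => simp [forestsWithEdges_zero]
  | succ e ih =>
    refine Nat.eq_of_mul_eq_mul_left e.succ_pos ?_
    rw [card_forestsWithEdges_succ, ih, pow_succ, show n - e - 1 = n - 1 - e by omega]
    calc n * (n - 1 - e) * ((n - 1).choose e * n ^ e)
        = (n - 1).choose e * (n - 1 - e) * (n ^ e * n) := by ring
      _ = (e + 1) * ((n - 1).choose (e + 1) * (n ^ e * n)) := by
        rw [← Nat.choose_succ_right_eq]; ring

lemma sum_forests_pow_card_nonroots (n x : ℕ) :
    ∑ p ∈ forests n, x ^ #(nonroots p) = ∑ e ∈ range (n + 1), #(forestsWithEdges n e) * x ^ e := by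
  rw [← sum_fiberwise_of_maps_to fun p _ => mem_range.2 (Nat.lt_succ_of_le
    ((card_le_univ (nonroots p)).trans_eq (Fintype.card_fin n)))]
  refine sum_congr rfl fun e _ => ?_
  rw [sum_congr rfl fun p hp => by rw [(mem_filter.1 hp).2], sum_const, smul_eq_mul]
  rfl

lemma weight_mem_Icc {b : ℕ} (t : ABForest n b b) {j i : Fin n} (h : t.1.1 j = some i) :
    t.1.2 j ∈ Icc 1 b := by
  obtain ⟨⟨d, hd⟩, -, hw⟩ := t.2
  have hij : (i : ℕ) ≠ j := fun hij => (hd j i h).ne (by rw [Fin.ext hij])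
  rcases Nat.lt_or_gt_of_ne hij with hlt | hlt
  · exact (hw j i h).1 hlt
  · exact (hw j i h).2 hlt

/-- The weights in `[1, b]` are shifted to `Fin b`; roots carry no weight. -/
noncomputable def equivSigmaWeights (n b : ℕ) :
    ABForest n b b ≃ Σ p : {p : ParentMap n // IsForest n p}, (nonroots p.1 → Fin b) where
  toFun t := ⟨⟨t.1.1, t.2.1⟩, fun j => ⟨t.1.2 j - 1, by
    obtain ⟨i, hi⟩ := Option.ne_none_iff_exists'.1 (mem_nonroots.1 j.2)
    have := mem_Icc.1 (weight_mem_Icc t hi)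
    omega⟩⟩
  invFun s := ⟨(s.1.1, fun j => if h : j ∈ nonroots s.1.1 then s.2 ⟨j, h⟩ + 1 else 0), s.1.2,
    fun j hj => dif_neg (by simpa using hj),
    fun j i (hji : s.1.1 j = some i) => by
      have hj : j ∈ nonroots s.1.1 := by simp [hji]
      simp only [dif_pos hj, mem_Icc]
      have := (s.2 ⟨j, hj⟩).isLt
      omega⟩
  left_inv t := by
    obtain ⟨⟨p, w⟩, hF, h0, hw⟩ := t
    refine Subtype.ext (Prod.ext rfl (funext fun j => ?_))
    by_cases hj : p j = none
    · simpa [hj] using (h0 j hj).symm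
    · obtain ⟨i, hi⟩ := Option.ne_none_iff_exists'.1 hj
      obtain ⟨hw1, -⟩ : 1 ≤ w j ∧ w j ≤ b := mem_Icc.1 (weight_mem_Icc ⟨(p, w), hF, h0, hw⟩ hi)
      simp only [mem_nonroots, ne_eq, hj, not_false_eq_true, ↓reduceDIte]
      omega
  right_inv s := by
    obtain ⟨p, W⟩ := s
    refine Sigma.ext rfl (heq_of_eq (funext fun j => Fin.ext ?_))
    simp

lemma card_eq_sum_forests (n b : ℕ) :
    Nat.card (ABForest n b b) = ∑ p ∈ forests n, b ^ #(nonroots p) := by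
  classical
  rw [Nat.card_congr (equivSigmaWeights n b), Nat.card_eq_fintype_card, Fintype.card_sigma]
  simp only [Fintype.card_fun, Fintype.card_coe, Fintype.card_fin]
  exact (sum_subtype (forests n) (fun _ => mem_forests) fun p => b ^ #(nonroots p)).symm

end RootedForest

lemma Nat.sum_range_choose_mul_pow_of_lt {R : Type*} [CommSemiring R] {k m : ℕ} (hkm : k < m)
    (x : R) : ∑ e ∈ Finset.range m, (k.choose e : R) * x ^ e = (x + 1) ^ k := by
  rw [add_pow, Finset.sum_subset (Finset.range_subset_range.2 hkm)]
  · exact Finset.sum_congr rfl fun e _ => by rw [one_pow, mul_one, mul_comm]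
  · intro e _ he
    simp [Nat.choose_eq_zero_of_lt (by simpa using he : k < e)]

open RootedForest Finset

theorem abForest_shi_count_general (n b : ℕ) :
    Nat.card (ABForest n b b) = (b * n + 1) ^ (n - 1) := by
  rw [card_eq_sum_forests, sum_forests_pow_card_nonroots,
    ← Nat.sum_range_choose_mul_pow_of_lt (by omega : n - 1 < n + 1) (b * n)]
  refine sum_congr rfl fun e _ => ?_
  rw [card_forestsWithEdges, Nat.cast_id, mul_pow]
  ring

/-- For a + b = 1 (so α = 1 − a = b, β = b), the total number of (b,b)-rooted
labelled forests on n vertices equals (bn+1)^{n−1}. -/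
theorem abForest_shi_count (n b : ℕ) (hn : 1 ≤ n) (hb : 1 ≤ b) :
    Nat.card (ABForest n b b) = (b * n + 1) ^ (n - 1) :=
  abForest_shi_count_general n b
end

section
/- For b ≥ 0 and n ≥ 1, the total number of (b+1, b)-rooted labelled forests on n vertices equals (bn+2)(bn+3)⋯(bn+n). -/
/-!
Let `R(n, q)` count `(α, β)`-forests on `n` vertices whose roots carry one of `q` colours.
Deleting the largest vertex of such a forest on `n + 1` vertices, its children (joined to it by
descending edges, of weight in `[1, β]`) become roots, recorded with `β` extra colours, giving a
forest counted by `R(n, q + β)`. The deleted vertex was a root (`q` ways) or hung by an ascending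
edge (`α` ways) below a vertex outside its own subtree, i.e. one whose root now has colour `< q`.
As the root colour is uniform over all `q + β` colours, a fraction `q / (q + β)` of the pointed
forests qualifies, so `(q + β) R(n + 1, q) = q (q + β + n α) R(n, q + β)` and
`R(n + 1, q) = q ∏_{i=1}^{n} (q + i α + (n + 1 - i) β)`. For `q = 1`, `α = b + 1`, `β = b` the
`i`-th factor is `b (n + 1) + i + 1`.
-/

open Finset

def Reaches {n : ℕ} (p : Fin n → Option (Fin n)) : Fin n → Fin n → Prop :=
  Relation.ReflTransGen fun j i => p j = some i

namespace Reaches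

variable {n : ℕ} {p : Fin n → Option (Fin n)} {a b c : Fin n}

theorem depth_le {d : Fin n → ℕ} (hd : ∀ j i, p j = some i → d i < d j)
    (h : Reaches p a b) : d b ≤ d a := by
  induction h with
  | refl => exact le_rfl
  | tail _ hlast ih => exact (hd _ _ hlast).le.trans ih

theorem total (hab : Reaches p a b) (hac : Reaches p a c) : Reaches p b c ∨ Reaches p c b := by
  induction hab using Relation.ReflTransGen.head_induction_on with
  | refl => exact Or.inl hac
  | head hxy hyb ih =>
    rcases Relation.ReflTransGen.cases_head hac with rfl | ⟨y', hxy', hy'c⟩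
    · exact Or.inr (Relation.ReflTransGen.head hxy hyb)
    · exact ih (Option.some.inj (hxy.symm.trans hxy') ▸ hy'c)

theorem eq_of_parent_eq_none (hb : p b = none) (h : Reaches p b c) : c = b := by
  rcases Relation.ReflTransGen.cases_head h with rfl | ⟨_, hbc, _⟩
  · rfl
  · simp [hb] at hbc

end Reaches

namespace IsForest

variable {n : ℕ} {p : Fin n → Option (Fin n)}

theorem not_reaches_of_parent (h : IsForest n p) {a b : Fin n} (hab : p a = some b) :
    ¬ Reaches p b a := by
  obtain ⟨d, hd⟩ := h
  exact fun hba => (hba.depth_le hd).not_gt (hd a b hab)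

theorem parent_ne_self (h : IsForest n p) (a : Fin n) : p a ≠ some a :=
  fun ha => h.not_reaches_of_parent ha Relation.ReflTransGen.refl

theorem exists_root (h : IsForest n p) (j : Fin n) : ∃ r, Reaches p j r ∧ p r = none := by
  obtain ⟨d, hd⟩ := h
  induction hj : d j using Nat.strong_induction_on generalizing j with
  | _ k ih =>
    rcases hp : p j with _ | i
    · exact ⟨j, Relation.ReflTransGen.refl, hp⟩
    · obtain ⟨r, hir, hr⟩ := ih (d i) (hj ▸ hd j i hp) i rfl
      exact ⟨r, Relation.ReflTransGen.head hp hir, hr⟩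

noncomputable def root (h : IsForest n p) (j : Fin n) : Fin n := (h.exists_root j).choose

theorem reaches_root (h : IsForest n p) (j : Fin n) : Reaches p j (h.root j) :=
  (h.exists_root j).choose_spec.1

theorem parent_root (h : IsForest n p) (j : Fin n) : p (h.root j) = none :=
  (h.exists_root j).choose_spec.2

theorem root_eq_of_reaches (h : IsForest n p) {j r : Fin n} (hjr : Reaches p j r)
    (hr : p r = none) : h.root j = r := by
  rcases hjr.total (h.reaches_root j) with H | H
  · exact H.eq_of_parent_eq_none hr
  · exact (H.eq_of_parent_eq_none (h.parent_root j)).symm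

theorem root_of_parent_eq_none (h : IsForest n p) {j : Fin n} (hj : p j = none) :
    h.root j = j :=
  h.root_eq_of_reaches Relation.ReflTransGen.refl hj

theorem root_of_parent_eq_some (h : IsForest n p) {j i : Fin n} (hj : p j = some i) :
    h.root j = h.root i :=
  h.root_eq_of_reaches (Relation.ReflTransGen.head hj (h.reaches_root i)) (h.parent_root i)

end IsForest

def LegalWeight {n : ℕ} (q α β : ℕ) (p : Fin n → Option (Fin n)) (w : Fin n → ℕ)
    (j : Fin n) : Prop :=
  (p j).elim (w j < q) fun i => w j ∈ Icc 1 (if i < j then α else β)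

/-- An `(α, β)`-forest whose roots carry one of `q` colours, stored as their weight;
`ABForest n α β` is the case `q = 1`. -/
@[ext]
structure ColoredForest_s16 (n q α β : ℕ) where
  parent : Fin n → Option (Fin n)
  weight : Fin n → ℕ
  isForest : IsForest n parent
  legal : ∀ j, LegalWeight q α β parent weight j

namespace ColoredForest_s16

variable {n q α β : ℕ} (F : ColoredForest_s16 n q α β)

theorem weight_lt_of_parent_eq_none {j : Fin n} (hj : F.parent j = none) : F.weight j < q := by
  simpa [LegalWeight, hj] using F.legal j

theorem weight_mem_of_parent_eq_some {j i : Fin n} (hj : F.parent j = some i) :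
    F.weight j ∈ Icc 1 (if i < j then α else β) := by
  simpa [LegalWeight, hj] using F.legal j

theorem weight_le (j : Fin n) : F.weight j ≤ q + α + β := by
  rcases hj : F.parent j with _ | i
  · have := F.weight_lt_of_parent_eq_none hj
    omega
  · have := F.weight_mem_of_parent_eq_some hj
    split_ifs at this <;> simp only [mem_Icc] at this <;> omega

instance : Finite (ColoredForest_s16 n q α β) :=
  Finite.of_injective
    (fun F => (F.parent, fun j => (⟨F.weight j, Nat.lt_succ_of_le (F.weight_le j)⟩ :
      Fin (q + α + β + 1))))
    fun _ _ h => ColoredForest_s16.ext (congrArg Prod.fst h)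
      (funext fun j => congrArg (fun x => ((x.2 j : Fin _) : ℕ)) h)

instance : Unique (ColoredForest_s16 0 q α β) where
  default := ⟨finZeroElim, finZeroElim, ⟨finZeroElim, finZeroElim⟩, finZeroElim⟩
  uniq _ := ColoredForest_s16.ext (funext finZeroElim) (funext finZeroElim)

noncomputable def root (j : Fin n) : Fin n := F.isForest.root j

theorem parent_root (j : Fin n) : F.parent (F.root j) = none := F.isForest.parent_root j

theorem root_of_parent_eq_none {j : Fin n} (hj : F.parent j = none) : F.root j = j :=
  F.isForest.root_of_parent_eq_none hj

theorem root_of_parent_eq_some {j i : Fin n} (hj : F.parent j = some i) : F.root j = F.root i :=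
  F.isForest.root_of_parent_eq_some hj

theorem weight_root_lt (j : Fin n) : F.weight (F.root j) < q :=
  F.weight_lt_of_parent_eq_none (F.parent_root j)

instance : IsEmpty (ColoredForest_s16 (n + 1) 0 α β) :=
  ⟨fun F => (F.weight_root_lt 0).not_ge (Nat.zero_le _)⟩

noncomputable def recolorRoot (i : Fin n) (v : ℕ) (hv : v < q) : ColoredForest_s16 n q α β where
  parent := F.parent
  weight := Function.update F.weight (F.root i) v
  isForest := F.isForest
  legal j := by
    rcases eq_or_ne j (F.root i) with rfl | hj
    · simpa [LegalWeight, F.parent_root] using hv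
    · simpa [LegalWeight, hj] using F.legal j

@[simp] theorem root_recolorRoot (i : Fin n) (v : ℕ) (hv : v < q) :
    (F.recolorRoot i v hv).root = F.root := rfl

@[simp] theorem weight_recolorRoot_root (i : Fin n) (v : ℕ) (hv : v < q) :
    (F.recolorRoot i v hv).weight (F.root i) = v :=
  Function.update_self ..

@[simp] theorem recolorRoot_recolorRoot (i : Fin n) (v u : ℕ) (hv : v < q) (hu : u < q) :
    (F.recolorRoot i v hv).recolorRoot i u hu = F.recolorRoot i u hu :=
  ColoredForest_s16.ext rfl (Function.update_idem ..)

@[simp] theorem recolorRoot_weight_root (i : Fin n) :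
    F.recolorRoot i (F.weight (F.root i)) (F.weight_root_lt i) = F :=
  ColoredForest_s16.ext rfl (Function.update_eq_self ..)

end ColoredForest_s16

def LowRooted (n Q α β c : ℕ) : Type :=
  { x : ColoredForest_s16 n Q α β × Fin n // x.1.weight (x.1.root x.2) < c }

instance {n Q α β c : ℕ} : Finite (LowRooted n Q α β c) := Subtype.finite

/-- The root colour of the tree of `i` is uniformly distributed over the `Q` colours,
independently of the rest of the forest. -/
noncomputable def LowRooted.swapRootColor {n Q α β c : ℕ} (hc : c ≤ Q) :
    Fin Q × LowRooted n Q α β c ≃ Fin c × (ColoredForest_s16 n Q α β × Fin n) where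
  toFun x := (⟨_, x.2.2⟩, (x.2.1.1.recolorRoot x.2.1.2 x.1 x.1.2, x.2.1.2))
  invFun y := (⟨_, y.2.1.weight_root_lt y.2.2⟩,
    ⟨(y.2.1.recolorRoot y.2.2 y.1 (y.1.2.trans_le hc), y.2.2), by simp⟩)
  left_inv := by
    rintro ⟨v, ⟨F, i⟩, h⟩
    simp
  right_inv := by
    rintro ⟨u, F, i⟩
    simp

theorem LowRooted.card_mul {n Q α β c : ℕ} (hc : c ≤ Q) :
    Q * Nat.card (LowRooted n Q α β c) = c * (Nat.card (ColoredForest_s16 n Q α β) * n) := by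
  simpa using Nat.card_congr (LowRooted.swapRootColor (n := n) (α := α) (β := β) hc)

namespace ColoredForest_s16

variable {n q α β : ℕ}

section Extend

variable (F : ColoredForest_s16 n (q + β) α β)

def extendParent (t : Option (Fin n)) : Fin (n + 1) → Option (Fin (n + 1)) :=
  Fin.lastCases (t.map Fin.castSucc) fun j =>
    if F.parent j = none ∧ q ≤ F.weight j then some (Fin.last n)
    else (F.parent j).map Fin.castSucc

def extendWeight (v : ℕ) : Fin (n + 1) → ℕ :=
  Fin.lastCases v fun j =>
    if F.parent j = none ∧ q ≤ F.weight j then F.weight j - q + 1 else F.weight j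

@[simp] theorem extendParent_last (t : Option (Fin n)) :
    F.extendParent t (Fin.last n) = t.map Fin.castSucc :=
  Fin.lastCases_last

@[simp] theorem extendParent_castSucc (t : Option (Fin n)) (j : Fin n) :
    F.extendParent t j.castSucc = if F.parent j = none ∧ q ≤ F.weight j then some (Fin.last n)
      else (F.parent j).map Fin.castSucc :=
  Fin.lastCases_castSucc j

@[simp] theorem extendWeight_last (v : ℕ) : F.extendWeight v (Fin.last n) = v :=
  Fin.lastCases_last

@[simp] theorem extendWeight_castSucc (v : ℕ) (j : Fin n) :
    F.extendWeight v j.castSucc =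
      if F.parent j = none ∧ q ≤ F.weight j then F.weight j - q + 1 else F.weight j :=
  Fin.lastCases_castSucc j

theorem isForest_extendParent {t : Option (Fin n)} (ht : ∀ i ∈ t, F.weight (F.root i) < q) :
    IsForest (n + 1) (F.extendParent t) := by
  obtain ⟨d, hd⟩ := F.isForest
  set dLast := t.elim 0 fun i => d i + 1
  -- the new vertex sits below a tree of colour `< q`, the trees of colour `≥ q` below it
  refine ⟨Fin.lastCases dLast fun j => d j + if q ≤ F.weight (F.root j) then dLast + 1 else 0,
    fun j i h => ?_⟩
  induction j using Fin.lastCases with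
  | last =>
    obtain ⟨i, rfl, rfl⟩ := Option.map_eq_some_iff.mp (F.extendParent_last t ▸ h)
    simp [dLast, (ht i rfl).not_ge]
  | cast j =>
    rw [extendParent_castSucc] at h
    split_ifs at h with hj
    · cases h
      simp only [Fin.lastCases_castSucc, Fin.lastCases_last, F.root_of_parent_eq_none hj.1,
        if_pos hj.2]
      omega
    · obtain ⟨i, hji, rfl⟩ := Option.map_eq_some_iff.mp h
      simp only [Fin.lastCases_castSucc, F.root_of_parent_eq_some hji]
      have := hd j i hji
      omega

theorem legal_extend {t : Option (Fin n)} {v : ℕ} (hv : t.elim (v < q) fun _ => v ∈ Icc 1 α)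
    (j : Fin (n + 1)) : LegalWeight q α β (F.extendParent t) (F.extendWeight v) j := by
  induction j using Fin.lastCases with
  | last => cases t <;> simpa [LegalWeight, Fin.castSucc_lt_last] using hv
  | cast j =>
    rcases hj : F.parent j with _ | i
    · have := F.weight_lt_of_parent_eq_none hj
      by_cases hq : q ≤ F.weight j
      · simpa [LegalWeight, hj, hq, Fin.castSucc_lt_last, not_lt_of_gt]
          using (show F.weight j - q + 1 ≤ β by omega)
      · simpa [LegalWeight, hj, hq] using not_le.mp hq
    · simpa [LegalWeight, hj] using F.weight_mem_of_parent_eq_some hj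

/-- The roots of colour `q + k` become children of the new largest vertex, by an edge of weight
`k + 1`. -/
def extend (t : Option (Fin n)) (v : ℕ) (ht : ∀ i ∈ t, F.weight (F.root i) < q)
    (hv : t.elim (v < q) fun _ => v ∈ Icc 1 α) : ColoredForest_s16 (n + 1) q α β where
  parent := F.extendParent t
  weight := F.extendWeight v
  isForest := F.isForest_extendParent ht
  legal := F.legal_extend hv

@[simp] theorem extend_parent (t : Option (Fin n)) (v : ℕ) (ht) (hv) :
    (F.extend t v ht hv).parent = F.extendParent t := rfl

@[simp] theorem extend_weight (t : Option (Fin n)) (v : ℕ) (ht) (hv) :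
    (F.extend t v ht hv).weight = F.extendWeight v := rfl

end Extend

section Restrict

variable (G : ColoredForest_s16 (n + 1) q α β)

def restrictParent (j : Fin n) : Option (Fin n) :=
  (G.parent j.castSucc).bind (Fin.lastCases none some)

def restrictWeight (j : Fin n) : ℕ :=
  if G.parent j.castSucc = some (Fin.last n) then q + (G.weight j.castSucc - 1)
  else G.weight j.castSucc

theorem restrictParent_eq_some {j i : Fin n} :
    G.restrictParent j = some i ↔ G.parent j.castSucc = some i.castSucc := by
  rcases h : G.parent j.castSucc with _ | k
  · simp [restrictParent, h]
  · induction k using Fin.lastCases <;> simp [restrictParent, h, eq_comm]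

theorem restrictParent_eq_none {j : Fin n} : G.restrictParent j = none ↔
    G.parent j.castSucc = none ∨ G.parent j.castSucc = some (Fin.last n) := by
  rcases h : G.parent j.castSucc with _ | k
  · simp [restrictParent, h]
  · induction k using Fin.lastCases <;> simp [restrictParent, h, Fin.castSucc_ne_last]

theorem weight_castSucc_mem_of_parent_eq_last {j : Fin n}
    (hj : G.parent j.castSucc = some (Fin.last n)) : G.weight j.castSucc ∈ Icc 1 β := by
  simpa [Fin.castSucc_lt_last, not_lt_of_gt] using G.weight_mem_of_parent_eq_some hj

theorem legal_restrict (j : Fin n) :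
    LegalWeight (q + β) α β G.restrictParent G.restrictWeight j := by
  rcases hr : G.restrictParent j with _ | i
  · simp only [LegalWeight, hr, Option.elim_none, restrictWeight]
    rcases G.restrictParent_eq_none.mp hr with hj | hj
    · have := G.weight_lt_of_parent_eq_none hj
      simp only [hj, reduceCtorEq, if_false]
      omega
    · have := G.weight_castSucc_mem_of_parent_eq_last hj
      simp only [hj, if_true, mem_Icc] at this ⊢
      omega
  · have hj := G.restrictParent_eq_some.mp hr
    simpa [LegalWeight, restrictWeight, hr, hj, Fin.castSucc_ne_last]
      using G.weight_mem_of_parent_eq_some hj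

/-- Delete the largest vertex; its children become roots, the edge weight `k + 1 ∈ [1, β]` turning
into the colour `q + k`. -/
def restrict : ColoredForest_s16 n (q + β) α β where
  parent := G.restrictParent
  weight := G.restrictWeight
  isForest :=
    let ⟨d, hd⟩ := G.isForest
    ⟨d ∘ Fin.castSucc, fun _ _ h => hd _ _ (G.restrictParent_eq_some.mp h)⟩
  legal := G.legal_restrict

@[simp] theorem restrict_parent : G.restrict.parent = G.restrictParent := rfl

@[simp] theorem restrict_weight : G.restrict.weight = G.restrictWeight := rfl

/-- The root of `i` is not a child of the largest vertex, as that would close a cycle. -/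
theorem weight_root_restrict_lt {i : Fin n} (hi : G.parent (Fin.last n) = some i.castSucc) :
    G.restrict.weight (G.restrict.root i) < q := by
  set r := G.restrict.root i
  rcases G.restrictParent_eq_none.mp (G.restrict.parent_root i) with hr | hr
  · show G.restrictWeight r < q
    rw [restrictWeight, hr, if_neg (Option.some_ne_none (Fin.last n)).symm]
    exact G.weight_lt_of_parent_eq_none hr
  · have hir : Reaches G.parent i.castSucc r.castSucc :=
      (G.restrict.isForest.reaches_root i).lift Fin.castSucc
        fun _ _ h => G.restrictParent_eq_some.mp h
    exact absurd (.head hi hir) (G.isForest.not_reaches_of_parent hr)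

end Restrict

theorem restrict_extend (F : ColoredForest_s16 n (q + β) α β) (t : Option (Fin n)) (v : ℕ)
    (ht : ∀ i ∈ t, F.weight (F.root i) < q) (hv : t.elim (v < q) fun _ => v ∈ Icc 1 α) :
    (F.extend t v ht hv).restrict = F := by
  ext j : 2 <;> rcases hj : F.parent j with _ | i <;> by_cases hq : q ≤ F.weight j <;>
    simp [restrictParent, restrictWeight, hj, hq]

theorem restrict_parent_eq_none_and_le_iff (G : ColoredForest_s16 (n + 1) q α β) {j : Fin n} :
    G.restrict.parent j = none ∧ q ≤ G.restrict.weight j ↔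
      G.parent j.castSucc = some (Fin.last n) := by
  simp only [restrict_parent, restrict_weight, restrictWeight, restrictParent_eq_none]
  rcases hj : G.parent j.castSucc with _ | k
  · simpa using G.weight_lt_of_parent_eq_none hj
  · induction k using Fin.lastCases <;> simp [Fin.castSucc_ne_last]

theorem extend_restrict (G : ColoredForest_s16 (n + 1) q α β) {t : Option (Fin n)} {v : ℕ}
    (ht : ∀ i ∈ t, G.restrict.weight (G.restrict.root i) < q)
    (hv : t.elim (v < q) fun _ => v ∈ Icc 1 α)
    (hp : G.parent (Fin.last n) = t.map Fin.castSucc) (hw : G.weight (Fin.last n) = v) :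
    G.restrict.extend t v ht hv = G := by
  ext j : 2 <;> induction j using Fin.lastCases
  · simp [hp]
  · simp only [extend_parent, extendParent_castSucc, restrict_parent_eq_none_and_le_iff]
    split_ifs with h
    · exact h.symm
    · rcases hj : G.parent _ with _ | k
      · simp [G.restrictParent_eq_none.mpr (Or.inl hj)]
      · induction k using Fin.lastCases
        · exact absurd hj h
        · simp [G.restrictParent_eq_some.mpr hj]
  · simp [hw]
  · simp only [extend_weight, extendWeight_castSucc, restrict_parent_eq_none_and_le_iff]
    split_ifs with h
    · have := G.weight_castSucc_mem_of_parent_eq_last h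
      simp only [restrict_weight, restrictWeight, if_pos h, mem_Icc] at this ⊢
      omega
    · simp [restrictWeight, h]

/-- The largest vertex is either a root, of one of `q` colours, or hangs by an edge of weight in
`[1, α]` below a vertex whose tree has root colour `< q`. -/
noncomputable def attachLargest :
    Fin q × ColoredForest_s16 n (q + β) α β ⊕ LowRooted n (q + β) α β q × Fin α →
      ColoredForest_s16 (n + 1) q α β
  | .inl (v, F) => F.extend none v (by simp) (by simp)
  | .inr (⟨(F, i), hi⟩, c) => F.extend (some i) (c + 1) (by simpa using hi) (by simp)

theorem attachLargest_injective :
    (attachLargest (n := n) (q := q) (α := α) (β := β)).Injective := by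
  rintro (⟨v, F⟩ | ⟨⟨⟨F, i⟩, hi⟩, c⟩) (⟨v', F'⟩ | ⟨⟨⟨F', i'⟩, hi'⟩, c'⟩) h <;>
    have hF := congrArg restrict h <;>
    have hp := congrArg (·.parent (Fin.last n)) h <;>
    have hw := congrArg (·.weight (Fin.last n)) h <;>
    simp only [attachLargest, restrict_extend, extend_parent, extendParent_last, extend_weight,
      extendWeight_last] at hF hp hw <;>
    simp_all [Fin.val_inj]

theorem attachLargest_surjective :
    (attachLargest (n := n) (q := q) (α := α) (β := β)).Surjective := by
  intro G
  rcases hG : G.parent (Fin.last n) with _ | k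
  · exact ⟨.inl (⟨G.weight (Fin.last n), G.weight_lt_of_parent_eq_none hG⟩, G.restrict),
      G.extend_restrict (t := none) (by simp) (G.weight_lt_of_parent_eq_none hG) (by simp [hG])
        rfl⟩
  · induction k using Fin.lastCases with
    | last => exact absurd hG (G.isForest.parent_ne_self _)
    | cast i =>
      have hw : G.weight (Fin.last n) ∈ Icc 1 α := by
        simpa [Fin.castSucc_lt_last] using G.weight_mem_of_parent_eq_some hG
      obtain ⟨c, hc⟩ : ∃ c : Fin α, (c : ℕ) + 1 = G.weight (Fin.last n) := by
        obtain ⟨hw₁, hwα⟩ := mem_Icc.mp hw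
        exact ⟨⟨_, Nat.sub_one_lt_of_le hw₁ hwα⟩, Nat.sub_add_cancel hw₁⟩
      exact ⟨.inr (⟨(G.restrict, i), G.weight_root_restrict_lt hG⟩, c),
        G.extend_restrict (t := some i) (by simpa using G.weight_root_restrict_lt hG)
          (by simpa [hc] using hw) (by simp [hG]) hc.symm⟩

theorem card_succ_eq_add : Nat.card (ColoredForest_s16 (n + 1) q α β) =
    q * Nat.card (ColoredForest_s16 n (q + β) α β) + Nat.card (LowRooted n (q + β) α β q) * α := by
  simpa using (Nat.card_congr
    (Equiv.ofBijective _ ⟨attachLargest_injective, attachLargest_surjective⟩)).symm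

theorem mul_card_succ : (q + β) * Nat.card (ColoredForest_s16 (n + 1) q α β) =
    q * (q + β + n * α) * Nat.card (ColoredForest_s16 n (q + β) α β) := by
  rw [card_succ_eq_add]
  linear_combination α * LowRooted.card_mul (n := n) (α := α) (Nat.le_add_right q β)

theorem card_succ_eq_prod : Nat.card (ColoredForest_s16 (n + 1) q α β) =
    q * ∏ i ∈ range n, (q + (i + 1) * α + (n - i) * β) := by
  induction n generalizing q with
  | zero =>
    rcases Nat.eq_zero_or_pos q with rfl | hq
    · simp
    refine Nat.eq_of_mul_eq_mul_left (Nat.add_pos_left hq β) ?_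
    simp [mul_card_succ, mul_comm]
  | succ n ih =>
    rcases Nat.eq_zero_or_pos q with rfl | hq
    · simp
    refine Nat.eq_of_mul_eq_mul_left (Nat.add_pos_left hq β) ?_
    have shift : ∏ i ∈ range n, (q + (i + 1) * α + (n + 1 - i) * β) =
        ∏ i ∈ range n, (q + β + (i + 1) * α + (n - i) * β) := by
      refine prod_congr rfl fun i hi => ?_
      rw [Nat.sub_add_comm (mem_range.mp hi).le]
      ring
    rw [mul_card_succ, ih, prod_range_succ, shift, Nat.add_sub_cancel_left]
    ring

end ColoredForest_s16

theorem abForest_weights_iff_legalWeight {n α β : ℕ} {p : Fin n → Option (Fin n)}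
    {w : Fin n → ℕ} (hp : IsForest n p) :
    ((∀ j, p j = none → w j = 0) ∧ ∀ j i, p j = some i →
      ((i : ℕ) < (j : ℕ) → w j ∈ Icc 1 α) ∧ ((j : ℕ) < (i : ℕ) → w j ∈ Icc 1 β)) ↔
    ∀ j, LegalWeight 1 α β p w j := by
  constructor
  · rintro ⟨hroot, hedge⟩ j
    rcases hj : p j with _ | i
    · simp [LegalWeight, hj, hroot j hj]
    · have hij : (i : ℕ) ≠ j := Fin.val_ne_of_ne fun h => hp.parent_ne_self j (h ▸ hj)
      rcases lt_or_gt_of_ne hij with hlt | hgt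
      · simpa [LegalWeight, hj, show i < j from hlt] using (hedge j i hj).1 hlt
      · simpa [LegalWeight, hj, (show j < i from hgt).not_gt] using (hedge j i hj).2 hgt
  · intro hl
    refine ⟨fun j hj => by simpa [LegalWeight, hj] using hl j,
      fun j i hj => ⟨fun hlt => ?_, fun hgt => ?_⟩⟩
    · simpa [LegalWeight, hj, show i < j from hlt] using hl j
    · simpa [LegalWeight, hj, (show j < i from hgt).not_gt] using hl j

def ABForest.equivColoredForest (n α β : ℕ) : ABForest n α β ≃ ColoredForest_s16 n 1 α β where
  toFun F := ⟨F.1.1, F.1.2, F.2.1, (abForest_weights_iff_legalWeight F.2.1).mp F.2.2⟩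
  invFun F :=
    ⟨(F.parent, F.weight), F.isForest, (abForest_weights_iff_legalWeight F.isForest).mpr F.legal⟩
  left_inv _ := rfl
  right_inv _ := rfl

theorem abForest_catalan_count_general (n b : ℕ) :
    Nat.card (ABForest n (b + 1) b) = ∏ i ∈ Finset.Icc 2 n, (b * n + i) := by
  rw [Nat.card_congr (ABForest.equivColoredForest n (b + 1) b)]
  cases n with
  | zero => simp
  | succ n =>
    rw [ColoredForest_s16.card_succ_eq_prod, one_mul, ← Ico_add_one_right_eq_Icc,
      prod_Ico_eq_prod_range, show n + 1 + 1 - 2 = n by omega]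
    refine prod_congr rfl fun i hi => ?_
    obtain ⟨k, rfl⟩ := Nat.exists_eq_add_of_lt (mem_range.mp hi)
    rw [show i + k + 1 - i = k + 1 by omega]
    ring

/-- For b ≥ 0 and n ≥ 1, the total number of (b+1, b)-rooted labelled forests
on n vertices equals (bn+2)(bn+3)⋯(bn+n). -/
theorem abForest_catalan_count (n b : ℕ) (hn : 1 ≤ n) :
    Nat.card (ABForest n (b + 1) b) = ∏ i ∈ Finset.Icc 2 n, (b * n + i) :=
  abForest_catalan_count_general n b
end
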